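/- arXiv:1508.06807 — 4 statements merged into one kernel-verified Lean document; each statement's English description precedes it below -/
import Mathlib

section
/- Let a ∈ ℝ and let u, ρ : ℝ×ℝ → ℝ be smooth functions satisfying ρ_t = −u ρ_x − (a−1) u_x ρ. Let φ : ℝ×ℝ → ℝ be smooth with ∂_t φ(t,x) = u(t, φ(t,x)), ∂_x φ(t,x) > 0, and φ(t, x+1) = φ(t,x) + 1 for all (t,x). If ρ(0,y) > 0 for all y ∈ ℝ, then ρ(t,y) > 0 for all t ∈ ℝ and all y ∈ ℝ. -/
open Real

/-- First partial derivative of a differentiable function on ℝ×ℝ, as a `HasDerivAt`. -/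
lemma hasDerivAt_partial_fst (F : ℝ × ℝ → ℝ) (hF : Differentiable ℝ F) (s z : ℝ) :
    HasDerivAt (fun τ => F (τ, z)) (fderiv ℝ F (s, z) (1, 0)) s :=
  (hF (s, z)).hasFDerivAt.comp_hasDerivAt s ((hasDerivAt_id s).prodMk (hasDerivAt_const s z))

/-- Second partial derivative of a differentiable function on ℝ×ℝ, as a `HasDerivAt`. -/
lemma hasDerivAt_partial_snd (F : ℝ × ℝ → ℝ) (hF : Differentiable ℝ F) (s z : ℝ) :
    HasDerivAt (fun w => F (s, w)) (fderiv ℝ F (s, z) (0, 1)) z :=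
  (hF (s, z)).hasFDerivAt.comp_hasDerivAt z ((hasDerivAt_const z s).prodMk (hasDerivAt_id z))

/-- A continuous lift of a circle map is surjective. -/
lemma lift_surjective (h : ℝ → ℝ) (hc : Continuous h) (hl : ∀ x, h (x + 1) = h x + 1) :
    ∀ y : ℝ, ∃ x, h x = y := by
  have key : ∀ n : ℕ, ∀ x, h (x + n) = h x + n := by
    intro n
    induction n with
    | zero => simp
    | succ k ih =>
      intro x
      have := hl (x + k)
      push_cast
      push_cast at this
      rw [← add_assoc, this, ih x]
      ring
  intro y
  obtain ⟨n, hn⟩ := exists_nat_ge (|y - h 0|)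
  have h1 : h (-(n : ℝ)) = h 0 - n := by
    have := key n (-(n : ℝ)); simp at this; linarith
  have h2 : h (n : ℝ) = h 0 + n := by
    have := key n 0; simpa using this
  have hy : y ∈ Set.Icc (h (-(n : ℝ))) (h (n : ℝ)) := by
    rw [h1, h2]
    have := abs_le.mp hn
    constructor <;> linarith [this.1, this.2]
  have hle : (-(n : ℝ)) ≤ (n : ℝ) := neg_le_self (Nat.cast_nonneg n)
  obtain ⟨x, _, hx⟩ := intermediate_value_Icc hle hc.continuousOn hy
  exact ⟨x, hx⟩

theorem rho_stays_positive (a : ℝ) (u ρ : ℝ → ℝ → ℝ) (φ : ℝ → ℝ → ℝ)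
    (hu : ContDiff ℝ (⊤ : ℕ∞) (Function.uncurry u)) (hρ : ContDiff ℝ (⊤ : ℕ∞) (Function.uncurry ρ))
    (hφ : ContDiff ℝ (⊤ : ℕ∞) (Function.uncurry φ))
    (hρt : ∀ t x, deriv (fun τ => ρ τ x) t
      = -(u t x) * deriv (ρ t) x - (a - 1) * deriv (u t) x * ρ t x)
    (hflow : ∀ t x, deriv (fun τ => φ τ x) t = u t (φ t x))
    (hφx : ∀ t x, 0 < deriv (φ t) x)
    (hlift : ∀ t x, φ t (x + 1) = φ t x + 1)
    (h0 : ∀ y, 0 < ρ 0 y) :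
    ∀ t y : ℝ, 0 < ρ t y := by
  intro t y
  have hρd : Differentiable ℝ (Function.uncurry ρ) := hρ.differentiable (by simp)
  have hud : Differentiable ℝ (Function.uncurry u) := hu.differentiable (by simp)
  have hφd : Differentiable ℝ (Function.uncurry φ) := hφ.differentiable (by simp)
  -- φ t is continuous and surjective; pick x with φ t x = y
  have hφtc : Continuous (φ t) := by
    have : Continuous fun w : ℝ => Function.uncurry φ (t, w) :=
      hφ.continuous.comp (continuous_const.prodMk continuous_id)
    exact this
  obtain ⟨x, hx⟩ := lift_surjective (φ t) hφtc (hlift t) y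
  -- the characteristic curve ψ s = φ s x
  set ψ : ℝ → ℝ := fun s => φ s x with hψdef
  have hψD : ∀ s, HasDerivAt ψ (u s (ψ s)) s := by
    intro s
    have h1 := hasDerivAt_partial_fst (Function.uncurry φ) hφd s x
    have h2 : deriv (fun τ => φ τ x) s = fderiv ℝ (Function.uncurry φ) (s, x) (1, 0) :=
      h1.deriv
    have h3 : fderiv ℝ (Function.uncurry φ) (s, x) (1, 0) = u s (φ s x) := by
      rw [← h2, hflow]
    rw [← h3]
    exact h1
  have hψc : Continuous ψ := by
    have : Differentiable ℝ ψ := fun s => (hψD s).differentiableAt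
    exact this.continuous
  -- f s = ρ s (ψ s)
  set f : ℝ → ℝ := fun s => ρ s (ψ s) with hfdef
  set c : ℝ → ℝ := fun s => -(a - 1) * deriv (u s) (ψ s) with hcdef
  have hfD : ∀ s, HasDerivAt f (c s * f s) s := by
    intro s
    have hcurve : HasDerivAt (fun s => ((s : ℝ), ψ s)) (1, u s (ψ s)) s :=
      (hasDerivAt_id s).prodMk (hψD s)
    have hcomp : HasDerivAt f
        (fderiv ℝ (Function.uncurry ρ) (s, ψ s) (1, u s (ψ s))) s :=
      by have h := (hρd (s, ψ s)).hasFDerivAt.comp_hasDerivAt s hcurve; exact h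
    have hsplit : fderiv ℝ (Function.uncurry ρ) (s, ψ s) (1, u s (ψ s))
        = fderiv ℝ (Function.uncurry ρ) (s, ψ s) (1, 0)
          + u s (ψ s) * fderiv ℝ (Function.uncurry ρ) (s, ψ s) (0, 1) := by
      have hv : ((1 : ℝ), u s (ψ s)) = (1, 0) + u s (ψ s) • ((0 : ℝ), (1 : ℝ)) := by
        simp [Prod.ext_iff]
      rw [hv, map_add, map_smul, smul_eq_mul]
    have hDt : fderiv ℝ (Function.uncurry ρ) (s, ψ s) (1, 0)
        = deriv (fun τ => ρ τ (ψ s)) s :=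
      (hasDerivAt_partial_fst (Function.uncurry ρ) hρd s (ψ s)).deriv.symm
    have hDx : fderiv ℝ (Function.uncurry ρ) (s, ψ s) (0, 1)
        = deriv (ρ s) (ψ s) :=
      (hasDerivAt_partial_snd (Function.uncurry ρ) hρd s (ψ s)).deriv.symm
    have hval : fderiv ℝ (Function.uncurry ρ) (s, ψ s) (1, u s (ψ s)) = c s * f s := by
      rw [hsplit, hDt, hDx, hρt s (ψ s), hcdef, hfdef]
      ring
    rw [← hval]
    exact hcomp
  -- c is continuous
  have hcc : Continuous c := by
    have h1 : Continuous fun s => fderiv ℝ (Function.uncurry u) (s, ψ s) :=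
      (hu.continuous_fderiv (by simp)).comp (continuous_id.prodMk hψc)
    have h2 : Continuous fun s => fderiv ℝ (Function.uncurry u) (s, ψ s) ((0 : ℝ), (1 : ℝ)) :=
      (ContinuousLinearMap.apply ℝ ℝ ((0 : ℝ), (1 : ℝ))).continuous.comp h1
    have h3 : ∀ s, deriv (u s) (ψ s)
        = fderiv ℝ (Function.uncurry u) (s, ψ s) ((0 : ℝ), (1 : ℝ)) := by
      intro s
      have h := (hasDerivAt_partial_snd (Function.uncurry u) hud s (ψ s)).deriv
      simp only [Function.uncurry_apply_pair] at h
      exact h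
    have : c = fun s => -(a - 1) * fderiv ℝ (Function.uncurry u) (s, ψ s) ((0 : ℝ), (1 : ℝ)) := by
      funext s; simp only [hcdef]; rw [h3 s]
    rw [this]
    exact continuous_const.mul h2
  -- integrating factor
  set C : ℝ → ℝ := fun s => ∫ τ in (0 : ℝ)..s, c τ with hCdef
  have hCD : ∀ s, HasDerivAt C (c s) s := fun s =>
    (hcc.integral_hasStrictDerivAt 0 s).hasDerivAt
  set g : ℝ → ℝ := fun s => f s * Real.exp (-C s) with hgdef
  have hgD : ∀ s, HasDerivAt g 0 s := by
    intro s
    have h := (hfD s).mul ((hCD s).neg.exp)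
    exact h.congr_deriv (by ring)
  have hconst : g t = g 0 :=
    is_const_of_deriv_eq_zero (fun s => (hgD s).differentiableAt)
      (fun s => (hgD s).deriv) t 0
  have hg0 : g 0 = f 0 := by
    simp [hgdef, hCdef]
  have hf0 : 0 < f 0 := h0 (ψ 0)
  have hgt : 0 < g t := by
    rw [hconst, hg0]; exact hf0
  have hft : 0 < f t := by
    by_contra h
    push_neg at h
    have : g t ≤ 0 := by
      rw [hgdef]
      exact mul_nonpos_of_nonpos_of_nonneg h (Real.exp_nonneg _)
    linarith
  have : f t = ρ t y := by rw [hfdef, hψdef]; simp [hx]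
  linarith
end

section
/- Let s > 0 be real, κ, α ∈ ℝ, and let u, ρ, m : ℝ×ℝ → ℝ be smooth functions, 1-periodic in the second (spatial) variable x, satisfying the system with a = 2: m_t = α u_x − 2 u_x m − u m_x − κ ρ ρ_x and ρ_t = −u ρ_x − u_x ρ. Suppose moreover that for every t ∈ ℝ and every k ∈ ℤ the Fourier coefficients satisfy m̂(t,·)_k = (1+|k|²)^s û(t,·)_k (i.e. m(t,·) = A u(t,·) for the inertia operator A = (1−D²)^s). Then the quantity t ↦ ∫₀¹ u(t,x) m(t,x) dx + κ ∫₀¹ ρ(t,x)² dx − α ∫₀¹ u(t,x) dx is constant in t. -/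
open MeasureTheory Real

/-- The `k`-th Fourier coefficient of a (continuous, `1`-periodic) function `f : ℝ → ℝ`,
`f̂ₖ = ∫₀¹ f(x) e^{-2πikx} dx`. -/
noncomputable def fourierCoef (f : ℝ → ℝ) (k : ℤ) : ℂ :=
  ∫ x in (0:ℝ)..1, (f x : ℂ) * Complex.exp (-2 * (Real.pi : ℂ) * Complex.I * (k : ℂ) * (x : ℂ))

namespace EnergyAux

open Complex Function intervalIntegral Metric AddCircle
open scoped InnerProductSpace ComplexConjugate

noncomputable def eker (k : ℤ) (x : ℝ) : ℂ :=
  Complex.exp (-2 * (Real.pi : ℂ) * Complex.I * (k : ℂ) * (x : ℂ))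

lemma fourierCoef_eq (f : ℝ → ℝ) (k : ℤ) :
    fourierCoef f k = ∫ x in (0:ℝ)..1, (f x : ℂ) * eker k x := rfl

lemma eker_hasDerivAt (k : ℤ) (x : ℝ) :
    HasDerivAt (eker k) (-2 * (Real.pi : ℂ) * Complex.I * (k : ℂ) * eker k x) x := by
  have h1 : HasDerivAt (fun x : ℝ => (-2 * (Real.pi : ℂ) * Complex.I * (k : ℂ)) * (x : ℂ))
      (-2 * (Real.pi : ℂ) * Complex.I * (k : ℂ)) x := by
    simpa using ((hasDerivAt_id x).ofReal_comp).const_mul (-2 * (Real.pi : ℂ) * Complex.I * (k : ℂ))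
  have h2 := h1.cexp
  unfold eker
  convert h2 using 1
  ring

lemma eker_cont (k : ℤ) : Continuous (eker k) := by
  unfold eker; fun_prop

lemma eker_contDiff (k : ℤ) : ContDiff ℝ (⊤ : ℕ∞) (eker k) :=
  Complex.contDiff_exp.comp (contDiff_const.mul Complex.ofRealCLM.contDiff)

lemma eker_one (k : ℤ) : eker k 1 = 1 := by
  unfold eker
  rw [show -2 * (Real.pi : ℂ) * Complex.I * (k : ℂ) * ((1:ℝ):ℂ)
      = (-k : ℤ) * (2 * Real.pi * Complex.I) by push_cast; ring]
  exact Complex.exp_int_mul_two_pi_mul_I (-k)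

lemma fourierCoef_zero (f : ℝ → ℝ) :
    fourierCoef f 0 = ((∫ x in (0:ℝ)..1, f x : ℝ) : ℂ) := by
  rw [fourierCoef_eq]
  rw [← intervalIntegral.integral_ofReal]
  refine intervalIntegral.integral_congr fun x _ => ?_
  simp [eker]

instance : Fact ((0:ℝ) < 1) := ⟨one_pos⟩

lemma fourierCoeff_lift (f : ℝ → ℂ) (hfp : Function.Periodic f 1) (k : ℤ) :
    fourierCoeff hfp.lift k
      = ∫ x in (0:ℝ)..1, f x * Complex.exp (-2 * (Real.pi : ℂ) * Complex.I * (k : ℂ) * (x : ℂ)) := by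
  rw [fourierCoeff_eq_intervalIntegral _ k 0]
  simp only [one_div, zero_add]
  rw [inv_one, one_smul]
  refine intervalIntegral.integral_congr fun x _ => ?_
  rw [Function.Periodic.lift_coe, fourier_coe_apply, smul_eq_mul, mul_comm]
  push_cast
  ring_nf

lemma parsevalLp (f g : Lp ℂ 2 (@haarAddCircle 1 _)) :
    ⟪f, g⟫_ℂ = ∑' k : ℤ, conj (fourierCoeff (T := 1) (⇑f) k) * fourierCoeff (T := 1) (⇑g) k := by
  have h := (fourierBasis (T := 1)).tsum_inner_mul_inner f g
  rw [← h]
  refine tsum_congr fun k => ?_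
  have h1 : ⟪(fourierBasis (T := 1)) k, f⟫_ℂ = fourierCoeff (T := 1) (⇑f) k := by
    rw [← fourierBasis_repr]; exact (fourierBasis.repr_apply_apply f k).symm
  have h2 : ⟪(fourierBasis (T := 1)) k, g⟫_ℂ = fourierCoeff (T := 1) (⇑g) k := by
    rw [← fourierBasis_repr]; exact (fourierBasis.repr_apply_apply g k).symm
  rw [← h1, ← h2, ← inner_conj_symm f ((fourierBasis (T := 1)) k), h1]

lemma continuous_periodic_lift {f : ℝ → ℂ} (hf : Continuous f) (hfp : Function.Periodic f 1) :
    Continuous hfp.lift :=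
  hf.quotient_liftOn' _

lemma parseval_real (f g : ℝ → ℝ) (hf : Continuous f) (hg : Continuous g)
    (hfp : Function.Periodic f 1) (hgp : Function.Periodic g 1) :
    ((∫ x in (0:ℝ)..1, f x * g x : ℝ) : ℂ)
      = ∑' k : ℤ, conj (fourierCoef f k) * fourierCoef g k := by
  have hfc : Function.Periodic (fun x => (f x : ℂ)) 1 := fun x => by simp [hfp x]
  have hgc : Function.Periodic (fun x => (g x : ℂ)) 1 := fun x => by simp [hgp x]
  set F : C(AddCircle (1:ℝ), ℂ) := ⟨hfc.lift,
    continuous_periodic_lift (Complex.continuous_ofReal.comp hf) hfc⟩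
  set G : C(AddCircle (1:ℝ), ℂ) := ⟨hgc.lift,
    continuous_periodic_lift (Complex.continuous_ofReal.comp hg) hgc⟩
  set FL : Lp ℂ 2 (@haarAddCircle 1 _) := ContinuousMap.toLp 2 haarAddCircle ℂ F
  set Gl2 : Lp ℂ 2 (@haarAddCircle 1 _) := ContinuousMap.toLp 2 haarAddCircle ℂ G
  have hFL : (⇑FL : AddCircle (1:ℝ) → ℂ) =ᵐ[@haarAddCircle 1 _] ⇑F := ContinuousMap.coeFn_toLp _ _
  have hGL : (⇑Gl2 : AddCircle (1:ℝ) → ℂ) =ᵐ[@haarAddCircle 1 _] ⇑G := ContinuousMap.coeFn_toLp _ _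
  have hcoefF : ∀ k, fourierCoeff (T := 1) (⇑FL) k = fourierCoef f k := by
    intro k
    rw [show fourierCoeff (T := 1) (⇑FL) k = fourierCoeff (T := 1) (⇑F) k from
      integral_congr_ae (hFL.mono fun x hx => by simp only [hx])]
    exact fourierCoeff_lift _ hfc k
  have hcoefG : ∀ k, fourierCoeff (T := 1) (⇑Gl2) k = fourierCoef g k := by
    intro k
    rw [show fourierCoeff (T := 1) (⇑Gl2) k = fourierCoeff (T := 1) (⇑G) k from
      integral_congr_ae (hGL.mono fun x hx => by simp only [hx])]
    exact fourierCoeff_lift _ hgc k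
  have hinner : ⟪FL, Gl2⟫_ℂ = ((∫ x in (0:ℝ)..1, f x * g x : ℝ) : ℂ) := by
    rw [MeasureTheory.L2.inner_def]
    rw [integral_congr_ae ((hFL.and hGL).mono fun x hx => by
      rw [RCLike.inner_apply', hx.1, hx.2] : ∀ᵐ x ∂(@haarAddCircle 1 _),
        inner ℂ (FL x) (Gl2 x) = conj (F x) * G x)]
    have hvol : ∫ z, conj (F z) * G z ∂(@haarAddCircle 1 _)
        = ∫ z, conj (F z) * G z := by
      rw [volume_eq_smul_haarAddCircle]
      simp
    rw [hvol, ← AddCircle.intervalIntegral_preimage 1 0 (fun z => conj (F z) * G z)]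
    rw [← intervalIntegral.integral_ofReal]
    rw [zero_add]
    refine intervalIntegral.integral_congr fun x _ => ?_
    show conj (hfc.lift ↑x) * hgc.lift ↑x = _
    rw [Function.Periodic.lift_coe, Function.Periodic.lift_coe, Complex.conj_ofReal]
    push_cast; ring
  rw [← hinner, parsevalLp]
  exact tsum_congr fun k => by rw [hcoefF, hcoefG]

section parametric

variable {E : Type*} [NormedAddCommGroup E] [NormedSpace ℝ E]

lemma hasDerivAt_slice (v : ℝ → ℝ → E) (hv : ContDiff ℝ (⊤ : ℕ∞) (Function.uncurry v)) (t x : ℝ) :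
    HasDerivAt (fun τ => v τ x) (fderiv ℝ (Function.uncurry v) (t, x) (1, 0)) t := by
  have h1 : HasDerivAt (fun σ : ℝ => (σ, x)) ((1:ℝ), (0:ℝ)) t :=
    (hasDerivAt_id t).prodMk (hasDerivAt_const t x)
  exact ((hv.differentiable (by simp) (t, x)).hasFDerivAt).comp_hasDerivAt t h1

lemma hasDerivAt_slice' (v : ℝ → ℝ → E) (hv : ContDiff ℝ (⊤ : ℕ∞) (Function.uncurry v)) (t x : ℝ) :
    HasDerivAt (fun τ => v τ x) (deriv (fun τ => v τ x) t) t := by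
  exact (hasDerivAt_slice v hv t x).differentiableAt.hasDerivAt

lemma continuous_partialT (v : ℝ → ℝ → E) (hv : ContDiff ℝ (⊤ : ℕ∞) (Function.uncurry v)) (t : ℝ) :
    Continuous (fun x => deriv (fun τ => v τ x) t) := by
  have hvtc : Continuous (fun p : ℝ × ℝ => fderiv ℝ (Function.uncurry v) p (1, 0)) :=
    (hv.continuous_fderiv (by simp)).clm_apply continuous_const
  have heq : (fun x => deriv (fun τ => v τ x) t)
      = fun x => fderiv ℝ (Function.uncurry v) (t, x) (1, 0) :=
    funext fun x => (hasDerivAt_slice v hv t x).deriv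
  rw [heq]
  exact hvtc.comp (Continuous.prodMk_right t)

lemma contDiff_slice (v : ℝ → ℝ → E) (hv : ContDiff ℝ (⊤ : ℕ∞) (Function.uncurry v)) (t : ℝ) :
    ContDiff ℝ (⊤ : ℕ∞) (v t) :=
  hv.comp (contDiff_const.prodMk contDiff_id)

variable [CompleteSpace E]

lemma hasDerivAt_parametric (v : ℝ → ℝ → E) (hv : ContDiff ℝ (⊤ : ℕ∞) (Function.uncurry v)) (t : ℝ) :
    HasDerivAt (fun τ => ∫ x in (0:ℝ)..1, v τ x)
      (∫ x in (0:ℝ)..1, deriv (fun τ => v τ x) t) t := by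
  set vt : ℝ × ℝ → E := fun p => fderiv ℝ (Function.uncurry v) p (1, 0) with hvt
  have hvtc : Continuous vt := (hv.continuous_fderiv (by simp)).clm_apply continuous_const
  have hder : ∀ (τ x : ℝ), HasDerivAt (fun σ => v σ x) (vt (τ, x)) τ := fun τ x =>
    hasDerivAt_slice v hv τ x
  have hderiv_eq : ∀ x, deriv (fun τ => v τ x) t = vt (t, x) := fun x => (hder t x).deriv
  obtain ⟨C, hC⟩ : ∃ C, ∀ p ∈ (Set.Icc (t-1) (t+1) ×ˢ Set.Icc (0:ℝ) 1), ‖vt p‖ ≤ C := by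
    rcases (isCompact_Icc.prod isCompact_Icc).exists_bound_of_continuousOn
      hvtc.continuousOn with ⟨C, hC⟩
    exact ⟨C, hC⟩
  have key := intervalIntegral.hasDerivAt_integral_of_dominated_loc_of_deriv_le
    (F := fun τ x => v τ x) (F' := fun τ x => vt (τ, x)) (x₀ := t)
    (a := (0:ℝ)) (b := 1) (μ := volume) (bound := fun _ => C) (s := ball t 1)
    (ball_mem_nhds t one_pos)
    (Filter.Eventually.of_forall fun τ =>
      ((hv.continuous.comp (Continuous.prodMk_right τ)).aestronglyMeasurable))
    ((hv.continuous.comp (Continuous.prodMk_right t)).intervalIntegrable 0 1)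
    ((hvtc.comp (Continuous.prodMk_right t)).aestronglyMeasurable)
    (Filter.Eventually.of_forall fun x hx τ hτ => by
      refine hC (τ, x) (Set.mem_prod.mpr ⟨?_, ?_⟩)
      · have h := abs_lt.mp (by simpa [Real.norm_eq_abs] using mem_ball_iff_norm.mp hτ)
        exact Set.mem_Icc.mpr ⟨by linarith [h.1], by linarith [h.2]⟩
      · rw [Set.uIoc_of_le (by norm_num : (0:ℝ) ≤ 1)] at hx
        exact ⟨hx.1.le, hx.2⟩)
    (intervalIntegrable_const)
    (Filter.Eventually.of_forall fun x _ τ _ => hder τ x)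
  rw [intervalIntegral.integral_congr (fun x _ => hderiv_eq x)]
  exact key.2

end parametric

lemma periodic_deriv' (f : ℝ → ℝ) (hfp : Function.Periodic f 1) :
    Function.Periodic (deriv f) 1 := by
  intro x
  have : deriv (fun y => f (y + 1)) x = deriv f (x + 1) := deriv_comp_add_const f 1 x
  rw [← this, show (fun y => f (y + 1)) = f from funext fun y => hfp y]

lemma periodic_partialT (v : ℝ → ℝ → ℝ) (hvp : ∀ τ, Function.Periodic (v τ) 1) (t : ℝ) :
    Function.Periodic (fun x => deriv (fun τ => v τ x) t) 1 := by
  intro x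
  simp only
  congr 1
  exact funext fun τ => hvp τ x

lemma fourierCoef_deriv (f : ℝ → ℝ) (hf : ContDiff ℝ (⊤ : ℕ∞) f) (hfp : Function.Periodic f 1) (k : ℤ) :
    fourierCoef (deriv f) k = 2 * (Real.pi : ℂ) * Complex.I * (k : ℂ) * fourierCoef f k := by
  have hU : ∀ x ∈ Set.uIcc (0:ℝ) 1, HasDerivAt (fun y : ℝ => (f y : ℂ)) ((deriv f x : ℝ) : ℂ) x :=
    fun x _ => ((hf.differentiable (by simp) x).hasDerivAt).ofReal_comp
  have hV : ∀ x ∈ Set.uIcc (0:ℝ) 1, HasDerivAt (eker k)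
      (-2 * (Real.pi : ℂ) * Complex.I * (k : ℂ) * eker k x) x := fun x _ => eker_hasDerivAt k x
  have hderc : Continuous (fun x => ((deriv f x : ℝ) : ℂ)) :=
    Complex.continuous_ofReal.comp (hf.continuous_deriv (by simp))
  have hint1 : IntervalIntegrable (fun x => ((deriv f x : ℝ) : ℂ)) volume 0 1 :=
    hderc.intervalIntegrable 0 1
  have boundary : (f 1 : ℂ) * eker k 1 - (f 0 : ℂ) * eker k 0 = 0 := by
    rw [eker_one]
    simp [eker, show f 1 = f 0 by simpa using (hfp 0)]
  have ibp := intervalIntegral.integral_deriv_mul_eq_sub (u := fun y : ℝ => (f y : ℂ))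
    (v := eker k) (u' := fun x => ((deriv f x : ℝ) : ℂ))
    (v' := fun x => -2 * (Real.pi : ℂ) * Complex.I * (k : ℂ) * eker k x)
    hU hV hint1 ((continuous_const.mul (eker_cont k)).intervalIntegrable 0 1)
  rw [boundary] at ibp
  have split : (∫ x in (0:ℝ)..1, (((deriv f x : ℝ) : ℂ) * eker k x
        + (f x : ℂ) * (-2 * (Real.pi : ℂ) * Complex.I * (k : ℂ) * eker k x)))
      = (∫ x in (0:ℝ)..1, ((deriv f x : ℝ) : ℂ) * eker k x)
        + (-2 * (Real.pi : ℂ) * Complex.I * (k : ℂ)) * ∫ x in (0:ℝ)..1, (f x : ℂ) * eker k x := by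
    have i1 : IntervalIntegrable (fun x => ((deriv f x : ℝ) : ℂ) * eker k x) volume 0 1 :=
      (hderc.mul (eker_cont k)).intervalIntegrable 0 1
    have i2 : IntervalIntegrable
        (fun x => (f x : ℂ) * (-2 * (Real.pi : ℂ) * Complex.I * (k : ℂ) * eker k x)) volume 0 1 := by
      apply Continuous.intervalIntegrable
      exact (Complex.continuous_ofReal.comp hf.continuous).mul (continuous_const.mul (eker_cont k))
    rw [intervalIntegral.integral_add i1 i2]
    rw [← intervalIntegral.integral_const_mul]
    congr 1
    exact intervalIntegral.integral_congr fun x _ => by ring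
  rw [split] at ibp
  have goal : (∫ x in (0:ℝ)..1, ((deriv f x : ℝ) : ℂ) * eker k x)
      = 2 * (Real.pi : ℂ) * Complex.I * (k : ℂ) * ∫ x in (0:ℝ)..1, (f x : ℂ) * eker k x := by
    linear_combination ibp
  exact goal

lemma coef_partialT (v : ℝ → ℝ → ℝ) (hv : ContDiff ℝ (⊤ : ℕ∞) (Function.uncurry v)) (t : ℝ) (k : ℤ) :
    HasDerivAt (fun τ => fourierCoef (v τ) k)
      (fourierCoef (fun x => deriv (fun τ => v τ x) t) k) t := by
  set vC : ℝ → ℝ → ℂ := fun τ x => (v τ x : ℂ) * eker k x with hvC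
  have hvCsm : ContDiff ℝ (⊤ : ℕ∞) (Function.uncurry vC) :=
    (Complex.ofRealCLM.contDiff.comp hv).mul ((eker_contDiff k).comp contDiff_snd)
  have h := hasDerivAt_parametric vC hvCsm t
  have hx : ∀ x, deriv (fun τ => vC τ x) t
      = (((deriv (fun τ => v τ x) t) : ℝ) : ℂ) * eker k x := fun x =>
    (((hasDerivAt_slice' v hv t x).ofReal_comp).mul_const (eker k x)).deriv
  rw [intervalIntegral.integral_congr (fun x _ => hx x)] at h
  exact h

end EnergyAux
namespace EnergyAux

section spectral

variable (s : ℝ) (u m : ℝ → ℝ → ℝ)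
  (hu : ContDiff ℝ (⊤ : ℕ∞) (Function.uncurry u)) (hm : ContDiff ℝ (⊤ : ℕ∞) (Function.uncurry m))
  (hup : ∀ t, Function.Periodic (u t) 1) (hmp : ∀ t, Function.Periodic (m t) 1)
  (hAu : ∀ t, ∀ k : ℤ,
    fourierCoef (m t) k = ((1 + |(k : ℝ)| ^ 2) ^ s : ℝ) * fourierCoef (u t) k)

include hu hm hAu in
lemma coef_mt (t : ℝ) (k : ℤ) :
    fourierCoef (fun x => deriv (fun τ => m τ x) t) k
      = (((1 + |(k : ℝ)| ^ 2) ^ s : ℝ) : ℂ) * fourierCoef (fun x => deriv (fun τ => u τ x) t) k := by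
  have h1 := coef_partialT m hm t k
  have h2 := (coef_partialT u hu t k).const_mul ((((1 + |(k : ℝ)| ^ 2) ^ s : ℝ)) : ℂ)
  have heq : (fun τ => fourierCoef (m τ) k)
      = fun τ => (((1 + |(k : ℝ)| ^ 2) ^ s : ℝ) : ℂ) * fourierCoef (u τ) k :=
    funext fun τ => hAu τ k
  rw [heq] at h1
  exact h1.unique h2

include hu hm hAu in
lemma spec0 (t : ℝ) :
    (∫ x in (0:ℝ)..1, deriv (fun τ => u τ x) t) = ∫ x in (0:ℝ)..1, deriv (fun τ => m τ x) t := by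
  have h := coef_mt s u m hu hm hAu t 0
  rw [fourierCoef_zero, fourierCoef_zero] at h
  have c1 : ((1 + |((0:ℤ) : ℝ)| ^ 2) ^ s : ℝ) = 1 := by
    norm_num
  rw [c1] at h
  have := h
  push_cast at this
  rw [one_mul] at this
  exact_mod_cast this.symm

include hu hm hup hmp hAu in
lemma spec1 (t : ℝ) :
    (∫ x in (0:ℝ)..1, deriv (fun τ => u τ x) t * m t x)
      = ∫ x in (0:ℝ)..1, u t x * deriv (fun τ => m τ x) t := by
  have hcut : Continuous (fun x => deriv (fun τ => u τ x) t) := continuous_partialT u hu t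
  have hcmt : Continuous (fun x => deriv (fun τ => m τ x) t) := continuous_partialT m hm t
  have hpu : Function.Periodic (fun x => deriv (fun τ => u τ x) t) 1 := periodic_partialT u hup t
  have hpm : Function.Periodic (fun x => deriv (fun τ => m τ x) t) 1 := periodic_partialT m hmp t
  have A := parseval_real _ (m t) hcut ((contDiff_slice m hm t)).continuous hpu (hmp t)
  have B := parseval_real (u t) _ ((contDiff_slice u hu t)).continuous hcmt (hup t) hpm
  have key : ((∫ x in (0:ℝ)..1, deriv (fun τ => u τ x) t * m t x : ℝ) : ℂ)
      = star ((∫ x in (0:ℝ)..1, u t x * deriv (fun τ => m τ x) t : ℝ) : ℂ) := by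
    rw [A, B, tsum_star]
    refine tsum_congr fun k => ?_
    rw [hAu t k, coef_mt s u m hu hm hAu t k]
    simp only [Complex.star_def, map_mul, Complex.conj_conj, Complex.conj_ofReal]
    ring
  rw [Complex.star_def, Complex.conj_ofReal] at key
  exact_mod_cast key

include hu hm hup hmp hAu in
lemma spec2 (t : ℝ) :
    (∫ x in (0:ℝ)..1, deriv (u t) x * m t x) = 0 := by
  have hcux : Continuous (deriv (u t)) := (contDiff_slice u hu t).continuous_deriv (by simp)
  have A := parseval_real (deriv (u t)) (m t) hcux (contDiff_slice m hm t).continuous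
    (periodic_deriv' (u t) (hup t)) (hmp t)
  set S := ∑' k : ℤ, (starRingEnd ℂ) (fourierCoef (deriv (u t)) k) * fourierCoef (m t) k with hS
  have hneg : star S = -S := by
    rw [hS, tsum_star, ← tsum_neg]
    refine tsum_congr fun k => ?_
    rw [fourierCoef_deriv (u t) (contDiff_slice u hu t) (hup t) k, hAu t k]
    simp only [Complex.star_def, map_mul, map_neg, Complex.conj_conj, Complex.conj_ofReal,
      Complex.conj_I, map_intCast, map_ofNat]
    ring
  have hreal : star S = S := by
    rw [← A, Complex.star_def, Complex.conj_ofReal]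
  have hzero : S = 0 := by
    have h2 : (2:ℂ) * S = 0 := by
      have := hreal.symm.trans hneg
      linear_combination this
    exact (mul_eq_zero.mp h2).resolve_left two_ne_zero
  rw [hzero] at A
  exact_mod_cast A

end spectral

end EnergyAux
theorem energy_conserved (s : ℝ) (hs : 0 < s) (κ α : ℝ)
    (u ρ m : ℝ → ℝ → ℝ)
    (hu : ContDiff ℝ (⊤ : ℕ∞) (Function.uncurry u)) (hρ : ContDiff ℝ (⊤ : ℕ∞) (Function.uncurry ρ))
    (hm : ContDiff ℝ (⊤ : ℕ∞) (Function.uncurry m))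
    (hup : ∀ t, Function.Periodic (u t) 1) (hρp : ∀ t, Function.Periodic (ρ t) 1)
    (hmp : ∀ t, Function.Periodic (m t) 1)
    (hmt : ∀ t x, deriv (fun τ => m τ x) t
      = α * deriv (u t) x - 2 * deriv (u t) x * m t x - u t x * deriv (m t) x
        - κ * ρ t x * deriv (ρ t) x)
    (hρt : ∀ t x, deriv (fun τ => ρ τ x) t
      = -(u t x) * deriv (ρ t) x - deriv (u t) x * ρ t x)
    (hAu : ∀ t, ∀ k : ℤ,
      fourierCoef (m t) k = ((1 + |(k : ℝ)| ^ 2) ^ s : ℝ) * fourierCoef (u t) k) :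
    ∀ t : ℝ,
      (∫ x in (0:ℝ)..1, u t x * m t x) + κ * (∫ x in (0:ℝ)..1, (ρ t x) ^ 2)
          - α * (∫ x in (0:ℝ)..1, u t x)
        = (∫ x in (0:ℝ)..1, u 0 x * m 0 x) + κ * (∫ x in (0:ℝ)..1, (ρ 0 x) ^ 2)
          - α * (∫ x in (0:ℝ)..1, u 0 x) := by
  open EnergyAux in
  have key : ∀ t : ℝ, HasDerivAt (fun t => (∫ x in (0:ℝ)..1, u t x * m t x)
      + κ * (∫ x in (0:ℝ)..1, (ρ t x) ^ 2) - α * (∫ x in (0:ℝ)..1, u t x)) 0 t := by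
    intro t
    have hcu := (contDiff_slice u hu t).continuous
    have hcm := (contDiff_slice m hm t).continuous
    have hcρ := (contDiff_slice ρ hρ t).continuous
    have hcut : Continuous fun x => deriv (fun τ => u τ x) t := continuous_partialT u hu t
    have hcmt : Continuous fun x => deriv (fun τ => m τ x) t := continuous_partialT m hm t
    have hcρt : Continuous fun x => deriv (fun τ => ρ τ x) t := continuous_partialT ρ hρ t
    have hcux : Continuous (deriv (u t)) := (contDiff_slice u hu t).continuous_deriv (by simp)
    have hcmx : Continuous (deriv (m t)) := (contDiff_slice m hm t).continuous_deriv (by simp)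
    have hcρx : Continuous (deriv (ρ t)) := (contDiff_slice ρ hρ t).continuous_deriv (by simp)
    have h1 : HasDerivAt (fun τ => ∫ x in (0:ℝ)..1, u τ x * m τ x)
        (∫ x in (0:ℝ)..1, (deriv (fun τ => u τ x) t * m t x
          + u t x * deriv (fun τ => m τ x) t)) t := by
      have h := hasDerivAt_parametric (fun τ x => u τ x * m τ x) (hu.mul hm) t
      rwa [intervalIntegral.integral_congr (f := fun x => deriv (fun τ => u τ x * m τ x) t)
        (g := fun x => deriv (fun τ => u τ x) t * m t x + u t x * deriv (fun τ => m τ x) t)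
        (fun x _ => ((hasDerivAt_slice' u hu t x).mul (hasDerivAt_slice' m hm t x)).deriv)] at h
    have h2 : HasDerivAt (fun τ => ∫ x in (0:ℝ)..1, (ρ τ x) ^ 2)
        (∫ x in (0:ℝ)..1, 2 * ρ t x * deriv (fun τ => ρ τ x) t) t := by
      have h := hasDerivAt_parametric (fun τ x => (ρ τ x) ^ 2) (hρ.pow 2) t
      rwa [intervalIntegral.integral_congr (g := fun x => 2 * ρ t x * deriv (fun τ => ρ τ x) t)
        (fun x _ => by
          rw [show deriv (fun τ => ρ τ x ^ 2) t = _ from ((hasDerivAt_slice' ρ hρ t x).pow 2).deriv]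
          push_cast
          ring)] at h
    have h3 : HasDerivAt (fun τ => ∫ x in (0:ℝ)..1, u τ x)
        (∫ x in (0:ℝ)..1, deriv (fun τ => u τ x) t) t := hasDerivAt_parametric u hu t
    have hE := (h1.add (h2.const_mul κ)).sub (h3.const_mul α)
    have hzero : (∫ x in (0:ℝ)..1, (deriv (fun τ => u τ x) t * m t x
          + u t x * deriv (fun τ => m τ x) t))
        + κ * (∫ x in (0:ℝ)..1, 2 * ρ t x * deriv (fun τ => ρ τ x) t)
        - α * (∫ x in (0:ℝ)..1, deriv (fun τ => u τ x) t) = 0 := by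
      -- split the first integral
      have hD1 : (∫ x in (0:ℝ)..1, (deriv (fun τ => u τ x) t * m t x
            + u t x * deriv (fun τ => m τ x) t))
          = (∫ x in (0:ℝ)..1, deriv (fun τ => u τ x) t * m t x)
            + ∫ x in (0:ℝ)..1, u t x * deriv (fun τ => m τ x) t :=
        intervalIntegral.integral_add ((hcut.mul hcm).intervalIntegrable 0 1)
          ((hcu.mul hcmt).intervalIntegrable 0 1)
      have hS1 := spec1 s u m hu hm hup hmp hAu t
      have hS0 := spec0 s u m hu hm hAu t
      have hS2 := spec2 s u m hu hm hup hmp hAu t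
      -- the exact-derivative function
      set q : ℝ → ℝ := fun x => 2*α*u t x*deriv (u t) x - 4*u t x*deriv (u t) x*m t x
        - 2*(u t x)^2*deriv (m t) x - 2*κ*deriv (u t) x*(ρ t x)^2
        - 4*κ*u t x*ρ t x*deriv (ρ t) x - α^2*deriv (u t) x
        + α*deriv (u t) x*m t x + α*u t x*deriv (m t) x + α*κ*ρ t x*deriv (ρ t) x with hq
      have hqc : Continuous q := by
        rw [hq]
        fun_prop
      have hw : ∀ x : ℝ, HasDerivAt (fun y => α*(u t y)^2 - 2*((u t y)^2*(m t y))
          - 2*κ*((u t y)*(ρ t y)^2) - α^2*(u t y) + α*((u t y)*(m t y))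
          + α*κ/2*(ρ t y)^2) (q x) x := by
        intro x
        have hu1 : HasDerivAt (u t) (deriv (u t) x) x :=
          ((contDiff_slice u hu t).differentiable (by simp) x).hasDerivAt
        have hm1 : HasDerivAt (m t) (deriv (m t) x) x :=
          ((contDiff_slice m hm t).differentiable (by simp) x).hasDerivAt
        have hρ1 : HasDerivAt (ρ t) (deriv (ρ t) x) x :=
          ((contDiff_slice ρ hρ t).differentiable (by simp) x).hasDerivAt
        have hu2 : HasDerivAt (fun y => (u t y)^2) (2*u t x*deriv (u t) x) x := by
          exact (by simpa using hu1.pow 2 : HasDerivAt (u t ^ 2) (2*u t x*deriv (u t) x) x)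
        have hρ2 : HasDerivAt (fun y => (ρ t y)^2) (2*ρ t x*deriv (ρ t) x) x := by
          exact (by simpa using hρ1.pow 2 : HasDerivAt (ρ t ^ 2) (2*ρ t x*deriv (ρ t) x) x)
        have H := (((((hu2.const_mul α).sub ((hu2.mul hm1).const_mul 2)).sub
          ((hu1.mul hρ2).const_mul (2*κ))).sub (hu1.const_mul (α^2))).add
          ((hu1.mul hm1).const_mul α)).add (hρ2.const_mul (α*κ/2))
        exact H.congr_deriv (by rw [hq]; ring)
      have hwint : (∫ x in (0:ℝ)..1, q x) = 0 := by
        rw [intervalIntegral.integral_eq_sub_of_hasDerivAt (fun x _ => hw x)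
          (hqc.intervalIntegrable 0 1)]
        have e1 : u t 1 = u t 0 := by simpa using hup t 0
        have e2 : m t 1 = m t 0 := by simpa using hmp t 0
        have e3 : ρ t 1 = ρ t 0 := by simpa using hρp t 0
        rw [e1, e2, e3]
        ring
      have hpoint : ∀ x : ℝ, 2*(u t x * deriv (fun τ => m τ x) t)
          + κ*(2 * ρ t x * deriv (fun τ => ρ τ x) t) - α * deriv (fun τ => m τ x) t
          = q x + α*(deriv (u t) x * m t x) := by
        intro x
        rw [hmt t x, hρt t x, hq]
        ring
      have i_f : IntervalIntegrable (fun x => 2*(u t x * deriv (fun τ => m τ x) t)) volume 0 1 :=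
        (continuous_const.mul (hcu.mul hcmt)).intervalIntegrable 0 1
      have i_g : IntervalIntegrable
          (fun x => κ*(2 * ρ t x * deriv (fun τ => ρ τ x) t)) volume 0 1 :=
        (continuous_const.mul ((continuous_const.mul hcρ).mul hcρt)).intervalIntegrable 0 1
      have i_h : IntervalIntegrable (fun x => α * deriv (fun τ => m τ x) t) volume 0 1 :=
        (continuous_const.mul hcmt).intervalIntegrable 0 1
      have hJ : (∫ x in (0:ℝ)..1, (2*(u t x * deriv (fun τ => m τ x) t)
          + κ*(2 * ρ t x * deriv (fun τ => ρ τ x) t) - α * deriv (fun τ => m τ x) t)) = 0 := by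
        rw [intervalIntegral.integral_congr (g := fun x => q x + α*(deriv (u t) x * m t x))
          (fun x _ => hpoint x)]
        rw [intervalIntegral.integral_add (f := q) (g := fun x => α*(deriv (u t) x * m t x))
          (hqc.intervalIntegrable 0 1)
          ((continuous_const.mul (hcux.mul hcm)).intervalIntegrable 0 1)]
        rw [hwint, intervalIntegral.integral_const_mul, hS2]
        ring
      have hJsplit : (∫ x in (0:ℝ)..1, (2*(u t x * deriv (fun τ => m τ x) t)
          + κ*(2 * ρ t x * deriv (fun τ => ρ τ x) t) - α * deriv (fun τ => m τ x) t))
          = 2*(∫ x in (0:ℝ)..1, u t x * deriv (fun τ => m τ x) t)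
            + κ*(∫ x in (0:ℝ)..1, 2 * ρ t x * deriv (fun τ => ρ τ x) t)
            - α*(∫ x in (0:ℝ)..1, deriv (fun τ => m τ x) t) := by
        rw [intervalIntegral.integral_sub (i_f.add i_g) i_h,
          intervalIntegral.integral_add i_f i_g,
          intervalIntegral.integral_const_mul, intervalIntegral.integral_const_mul,
          intervalIntegral.integral_const_mul]
      have hz := hJsplit.symm.trans hJ
      rw [hD1, hS1, hS0]
      linarith [hz]
    have hE' := hE
    rw [hzero] at hE'
    exact hE'
  intro t
  exact is_const_of_deriv_eq_zero (fun τ => (key τ).differentiableAt)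
    (fun τ => (key τ).deriv) t 0
end

section
/- Let s > 0 be real, κ ≥ 0, α ∈ ℝ, and let u, ρ, m : ℝ×ℝ → ℝ be smooth functions, 1-periodic in the second (spatial) variable x, satisfying the system with a = 2: m_t = α u_x − 2 u_x m − u m_x − κ ρ ρ_x and ρ_t = −u ρ_x − u_x ρ, and such that for every t ∈ ℝ and k ∈ ℤ the Fourier coefficients satisfy m̂(t,·)_k = (1+|k|²)^s û(t,·)_k. Then for all t ∈ ℝ: (3/4) ∫₀¹ u(t,x) m(t,x) dx + κ ∫₀¹ ρ(t,x)² dx ≤ ∫₀¹ u(0,x) m(0,x) dx + κ ∫₀¹ ρ(0,x)² dx − α ∫₀¹ u(0,x) dx + α². In particular ‖u(t,·)‖_{H^s}² = ∫₀¹ u(t,x) m(t,x) dx is bounded uniformly in t. -/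
open MeasureTheory Real

namespace HsAux


open Complex Function intervalIntegral AddCircle

local instance : Fact ((0:ℝ) < 1) := ⟨one_pos⟩

noncomputable def cf {f : ℝ → ℝ} (hp : Function.Periodic f 1) : AddCircle (1:ℝ) → ℂ :=
  (hp.comp (fun r : ℝ => (r : ℂ))).lift

lemma cf_coe {f : ℝ → ℝ} (hp : Function.Periodic f 1) (x : ℝ) :
    cf hp (x : AddCircle (1:ℝ)) = (f x : ℂ) :=
  Function.Periodic.lift_coe _ x

lemma cf_cont {f : ℝ → ℝ} (hf : Continuous f) (hp : Function.Periodic f 1) :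
    Continuous (cf hp) :=
  Continuous.quotient_liftOn' (Complex.continuous_ofReal.comp hf) _

lemma fourierCoeff_cf {f : ℝ → ℝ} (hp : Function.Periodic f 1) (k : ℤ) :
    fourierCoeff (cf hp) k = fourierCoef f k := by
  rw [fourierCoeff_eq_intervalIntegral _ k 0]
  rw [show ((1:ℝ)/1) = 1 by norm_num, one_smul, zero_add]
  unfold fourierCoef
  apply intervalIntegral.integral_congr
  intro x _
  dsimp only
  erw [cf_coe, fourier_coe_apply, smul_eq_mul, mul_comm]
  congr 1
  push_cast
  ring_nf

theorem parseval {f g : ℝ → ℝ} (hf : Continuous f) (hfp : Function.Periodic f 1)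
    (hg : Continuous g) (hgp : Function.Periodic g 1) :
    Summable (fun k : ℤ => (starRingEnd ℂ) (fourierCoef f k) * fourierCoef g k) ∧
    ((∫ x in (0:ℝ)..1, f x * g x : ℝ) : ℂ)
      = ∑' k : ℤ, (starRingEnd ℂ) (fourierCoef f k) * fourierCoef g k := by
  set F : C(AddCircle (1:ℝ), ℂ) := ⟨cf hfp, cf_cont hf hfp⟩ with hF
  set G : C(AddCircle (1:ℝ), ℂ) := ⟨cf hgp, cf_cont hg hgp⟩ with hG
  set Ff := ContinuousMap.toLp (E := ℂ) 2 haarAddCircle ℂ F with hFf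
  set Gg := ContinuousMap.toLp (E := ℂ) 2 haarAddCircle ℂ G with hGg
  have hrF : ∀ k : ℤ, (fourierBasis.repr Ff) k = fourierCoef f k := by
    intro k
    rw [fourierBasis_repr]
    rw [show ((Ff : Lp ℂ 2 haarAddCircle) : AddCircle (1:ℝ) →ₘ[haarAddCircle] ℂ)
      = ((ContinuousMap.toLp 2 haarAddCircle ℂ) F : AddCircle (1:ℝ) →ₘ[haarAddCircle] ℂ) from rfl]
    rw [fourierCoeff_toLp]
    exact fourierCoeff_cf hfp k
  have hrG : ∀ k : ℤ, (fourierBasis.repr Gg) k = fourierCoef g k := by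
    intro k
    rw [fourierBasis_repr]
    rw [show ((Gg : Lp ℂ 2 haarAddCircle) : AddCircle (1:ℝ) →ₘ[haarAddCircle] ℂ)
      = ((ContinuousMap.toLp 2 haarAddCircle ℂ) G : AddCircle (1:ℝ) →ₘ[haarAddCircle] ℂ) from rfl]
    rw [fourierCoeff_toLp]
    exact fourierCoeff_cf hgp k
  have hsum : Summable (fun k : ℤ => (starRingEnd ℂ) (fourierCoef f k) * fourierCoef g k) := by
    have := lp.summable_inner (𝕜 := ℂ) (fourierBasis.repr Ff) (fourierBasis.repr Gg)
    apply this.congr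
    intro k
    rw [RCLike.inner_apply', hrF, hrG]
  refine ⟨hsum, ?_⟩
  have hinner : (inner ℂ Ff Gg : ℂ)
      = ∑' k : ℤ, (starRingEnd ℂ) (fourierCoef f k) * fourierCoef g k := by
    rw [← fourierBasis.repr.inner_map_map Ff Gg, lp.inner_eq_tsum]
    congr 1
    funext k
    rw [RCLike.inner_apply', hrF, hrG]
  rw [← hinner, L2.inner_def]
  have h1 : ∫ z : AddCircle (1:ℝ), (inner ℂ (Ff z) (Gg z) : ℂ) ∂haarAddCircle
      = ∫ z : AddCircle (1:ℝ), (starRingEnd ℂ) (F z) * G z ∂haarAddCircle := by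
    apply MeasureTheory.integral_congr_ae
    filter_upwards [ContinuousMap.coeFn_toLp (p := 2) (μ := haarAddCircle) (𝕜 := ℂ) F,
      ContinuousMap.coeFn_toLp (p := 2) (μ := haarAddCircle) (𝕜 := ℂ) G] with z h2 h3
    rw [RCLike.inner_apply', hFf, hGg, h2, h3]
  rw [h1]
  have h2 : ∫ z : AddCircle (1:ℝ), (starRingEnd ℂ) (F z) * G z ∂haarAddCircle
      = ∫ z : AddCircle (1:ℝ), (starRingEnd ℂ) (F z) * G z := by
    rw [AddCircle.volume_eq_smul_haarAddCircle, MeasureTheory.integral_smul_measure]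
    simp
  rw [h2, ← AddCircle.intervalIntegral_preimage (1:ℝ) 0 (fun z => (starRingEnd ℂ) (F z) * G z),
    zero_add]
  have h3 : ∀ x : ℝ, (starRingEnd ℂ) (F (x : AddCircle (1:ℝ))) * G (x : AddCircle (1:ℝ))
      = ((f x * g x : ℝ) : ℂ) := by
    intro x
    rw [hF, hG]
    show (starRingEnd ℂ) (cf hfp x) * cf hgp x = _
    rw [cf_coe, cf_coe, Complex.conj_ofReal]
    push_cast
    ring
  rw [intervalIntegral.integral_congr (fun x _ => h3 x), intervalIntegral.integral_ofReal]



open Complex Function intervalIntegral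

/-- trivial integral of derivative of a periodic function -/
theorem integral_deriv_periodic (g : ℝ → ℝ) (hg : Differentiable ℝ g)
    (hg' : Continuous (deriv g)) (hgp : g 1 = g 0) :
    ∫ x in (0:ℝ)..1, deriv g x = 0 := by
  rw [intervalIntegral.integral_deriv_eq_sub (fun x _ => hg x) (hg'.intervalIntegrable 0 1), hgp,
    sub_self]

/-- Differentiation under the interval integral. -/
theorem hasDerivAt_param {E : Type*} [NormedAddCommGroup E] [NormedSpace ℝ E]
    (F G : ℝ → ℝ → E) (hF : Continuous (Function.uncurry F))
    (hG : Continuous (Function.uncurry G))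
    (hd : ∀ t x, HasDerivAt (fun τ => F τ x) (G t x) t) (t₀ : ℝ) :
    HasDerivAt (fun τ => ∫ x in (0:ℝ)..1, F τ x) (∫ x in (0:ℝ)..1, G t₀ x) t₀ := by
  obtain ⟨C, hC⟩ := (((isCompact_Icc (a := t₀ - 1) (b := t₀ + 1)).prod
    (isCompact_Icc (a := (0:ℝ)) (b := 1)))).exists_bound_of_continuousOn hG.continuousOn
  refine (intervalIntegral.hasDerivAt_integral_of_dominated_loc_of_deriv_le
    (F := F) (F' := G) (bound := fun _ => C) (Metric.ball_mem_nhds _ one_pos) ?_ ?_ ?_ ?_ ?_ ?_).2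
  · filter_upwards with τ
    exact ((hF.comp (continuous_const.prodMk continuous_id)).aestronglyMeasurable :)
  · exact (hF.comp (continuous_const.prodMk continuous_id)).intervalIntegrable 0 1
  · exact ((hG.comp (continuous_const.prodMk continuous_id)).aestronglyMeasurable :)
  · filter_upwards with x hx τ hτ
    refine hC (τ, x) ⟨?_, ?_⟩
    · have := Metric.mem_ball.mp hτ
      rw [Real.dist_eq] at this
      constructor <;> [linarith [abs_le.mp this.le]; linarith [(abs_le.mp this.le).2]]
    · rw [Set.uIoc_of_le (by norm_num : (0:ℝ) ≤ 1)] at hx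
      exact ⟨hx.1.le, hx.2⟩
  · exact intervalIntegrable_const
  · filter_upwards with x _ τ _
    exact hd τ x

/-- Partial derivative in the second variable: pointwise `HasDerivAt` + joint continuity. -/
theorem partial_snd (u : ℝ → ℝ → ℝ) (hu : ContDiff ℝ (⊤ : ℕ∞) (Function.uncurry u)) :
    (∀ t x, HasDerivAt (u t) (deriv (u t) x) x) ∧
      Continuous (fun p : ℝ × ℝ => deriv (u p.1) p.2) := by
  have key : ∀ t x, HasDerivAt (u t)
      (fderiv ℝ (Function.uncurry u) (t, x) (0, 1)) x := by
    intro t x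
    have h1 : HasFDerivAt (Function.uncurry u) (fderiv ℝ (Function.uncurry u) (t, x)) (t, x) :=
      ((hu.differentiable (by simp)) (t, x)).hasFDerivAt
    have h2 : HasDerivAt (fun y : ℝ => ((t, y) : ℝ × ℝ)) ((0 : ℝ), (1 : ℝ)) x :=
      (hasDerivAt_const x t).prodMk (hasDerivAt_id x)
    exact h1.comp_hasDerivAt x h2
  have hd : ∀ t x, HasDerivAt (u t) (deriv (u t) x) x := by
    intro t x
    have := key t x
    rwa [← this.deriv] at this
  refine ⟨hd, ?_⟩
  have : Continuous (fun p : ℝ × ℝ => fderiv ℝ (Function.uncurry u) p (0, 1)) :=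
    (hu.continuous_fderiv (by simp)).clm_apply continuous_const
  exact this.congr (fun p => ((key p.1 p.2).deriv).symm)

/-- Partial derivative in the first variable. -/
theorem partial_fst (u : ℝ → ℝ → ℝ) (hu : ContDiff ℝ (⊤ : ℕ∞) (Function.uncurry u)) :
    (∀ t x, HasDerivAt (fun τ => u τ x) (deriv (fun τ => u τ x) t) t) ∧
      Continuous (fun p : ℝ × ℝ => deriv (fun τ => u τ p.2) p.1) := by
  have key : ∀ t x, HasDerivAt (fun τ => u τ x)
      (fderiv ℝ (Function.uncurry u) (t, x) (1, 0)) t := by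
    intro t x
    have h1 : HasFDerivAt (Function.uncurry u) (fderiv ℝ (Function.uncurry u) (t, x)) (t, x) :=
      ((hu.differentiable (by simp)) (t, x)).hasFDerivAt
    have h2 : HasDerivAt (fun τ : ℝ => ((τ, x) : ℝ × ℝ)) ((1 : ℝ), (0 : ℝ)) t :=
      (hasDerivAt_id t).prodMk (hasDerivAt_const t x)
    exact h1.comp_hasDerivAt t h2
  have hd : ∀ t x, HasDerivAt (fun τ => u τ x) (deriv (fun τ => u τ x) t) t := by
    intro t x
    have := key t x
    rwa [← this.deriv] at this
  refine ⟨hd, ?_⟩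
  have : Continuous (fun p : ℝ × ℝ => fderiv ℝ (Function.uncurry u) p (1, 0)) :=
    (hu.continuous_fderiv (by simp)).clm_apply continuous_const
  exact this.congr (fun p => ((key p.1 p.2).deriv).symm)

/-- Fourier coefficient of the derivative of a smooth periodic function. -/
theorem fourierCoef_deriv (f : ℝ → ℝ) (hf : ContDiff ℝ (⊤ : ℕ∞) f) (hfp : Function.Periodic f 1)
    (k : ℤ) :
    fourierCoef (deriv f) k = 2 * (π : ℂ) * Complex.I * (k : ℂ) * fourierCoef f k := by
  set c : ℂ := -2 * (π : ℂ) * Complex.I * (k : ℂ) with hc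
  have hB : ∀ x : ℝ, HasDerivAt (fun y : ℝ => Complex.exp (c * (y : ℂ)))
      (c * Complex.exp (c * (x : ℂ))) x := by
    intro x
    have h1 : HasDerivAt (fun y : ℝ => c * (y : ℂ)) c x := by
      simpa using ((hasDerivAt_id x).ofReal_comp.const_mul c)
    simpa [mul_comm] using h1.cexp
  have hA : ∀ x : ℝ, HasDerivAt (fun y : ℝ => ((f y : ℂ)))
      (Complex.ofReal (deriv f x)) x := fun x =>
    ((hf.differentiable (by simp) x).hasDerivAt).ofReal_comp
  have hil : IntervalIntegrable (fun x : ℝ => c * Complex.exp (c * (x : ℂ))) volume 0 1 :=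
    (Continuous.intervalIntegrable (by continuity)) 0 1
  have hir : IntervalIntegrable (fun x : ℝ => ((deriv f x : ℝ) : ℂ)) volume 0 1 :=
    (Continuous.intervalIntegrable (Complex.continuous_ofReal.comp (hf.continuous_deriv (by simp)))) 0 1
  have key := intervalIntegral.integral_mul_deriv_eq_deriv_mul
    (u := fun x : ℝ => Complex.exp (c * (x : ℂ))) (v := fun x : ℝ => ((f x : ℝ) : ℂ))
    (u' := fun x : ℝ => c * Complex.exp (c * (x : ℂ))) (v' := fun x : ℝ => ((deriv f x : ℝ) : ℂ))
    (fun x _ => hB x) (fun x _ => hA x) hil hir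
  have e0 : Complex.exp (c * ((0 : ℝ) : ℂ)) = 1 := by simp
  have e1 : Complex.exp (c * ((1 : ℝ) : ℂ)) = 1 := by
    rw [hc]
    rw [show (-2 * (π : ℂ) * Complex.I * (k : ℂ) * ((1:ℝ):ℂ)) = ((-k : ℤ) : ℂ) * (2 * π * Complex.I) by push_cast; ring]
    exact Complex.exp_int_mul_two_pi_mul_I (-k)
  have hper : f 1 = f 0 := by simpa using hfp 0
  have lhs : fourierCoef (deriv f) k = ∫ x in (0:ℝ)..1,
      Complex.exp (c * (x : ℂ)) * ((deriv f x : ℝ) : ℂ) := by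
    unfold fourierCoef
    apply intervalIntegral.integral_congr
    intro x _
    rw [hc]
    ring_nf
  have rhs : fourierCoef f k = ∫ x in (0:ℝ)..1,
      ((f x : ℝ) : ℂ) * Complex.exp (c * (x : ℂ)) := by
    unfold fourierCoef
    apply intervalIntegral.integral_congr
    intro x _
    rw [hc]
  rw [lhs, key]
  simp only [e0, e1, hper, one_mul]
  have : ∫ x in (0:ℝ)..1, c * Complex.exp (c * (x : ℂ)) * ((f x : ℝ) : ℂ)
      = c * fourierCoef f k := by
    rw [rhs, ← intervalIntegral.integral_const_mul]
    apply intervalIntegral.integral_congr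
    intro x _
    ring
  rw [this, hc]
  ring



open Complex Function intervalIntegral


theorem periodic_deriv (f : ℝ → ℝ) (hf : Function.Periodic f 1) :
    Function.Periodic (deriv f) 1 := by
  intro x
  have h1 : (fun y : ℝ => f (y + 1)) = f := funext fun y => hf y
  have := deriv_comp_add_const f 1 x
  rw [h1] at this
  exact this.symm

theorem fourierCoef_zero (f : ℝ → ℝ) :
    fourierCoef f 0 = ((∫ x in (0:ℝ)..1, f x : ℝ) : ℂ) := by
  unfold fourierCoef
  rw [← intervalIntegral.integral_ofReal]
  apply intervalIntegral.integral_congr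
  intro x _
  simp

/-- `∫ f' g = 0` when `ĝ = c ⬝ f̂` with real symmetric multiplier. -/
theorem integral_deriv_mul_eq_zero (c : ℤ → ℝ) (f g : ℝ → ℝ)
    (hf : ContDiff ℝ (⊤ : ℕ∞) f) (hfp : Function.Periodic f 1)
    (hg : Continuous g) (hgp : Function.Periodic g 1)
    (hfg : ∀ k : ℤ, fourierCoef g k = (c k : ℂ) * fourierCoef f k) :
    ∫ x in (0:ℝ)..1, deriv f x * g x = 0 := by
  obtain ⟨hsum, heq⟩ := parseval (hf.continuous_deriv (by simp)) (periodic_deriv f hfp) hg hgp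
  set r : ℝ := ∫ x in (0:ℝ)..1, deriv f x * g x with hr
  have hstar : ∀ k : ℤ, (starRingEnd ℂ) ((starRingEnd ℂ) (fourierCoef (deriv f) k)
      * fourierCoef g k) = -((starRingEnd ℂ) (fourierCoef (deriv f) k) * fourierCoef g k) := by
    intro k
    rw [fourierCoef_deriv f hf hfp k, hfg k]
    simp only [map_mul, map_neg, Complex.conj_conj, Complex.conj_I, Complex.conj_ofReal,
      map_ofNat, map_intCast]
    ring
  have h2 : (r : ℂ) = -(r : ℂ) := by
    calc (r : ℂ) = (starRingEnd ℂ) ((r : ℂ)) := (Complex.conj_ofReal r).symm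
    _ = (starRingEnd ℂ) (∑' k : ℤ, (starRingEnd ℂ) (fourierCoef (deriv f) k) * fourierCoef g k) := by
        rw [heq]
    _ = ∑' k : ℤ, (starRingEnd ℂ) ((starRingEnd ℂ) (fourierCoef (deriv f) k) * fourierCoef g k) := by
        exact tsum_star
    _ = ∑' k : ℤ, -((starRingEnd ℂ) (fourierCoef (deriv f) k) * fourierCoef g k) := by
        exact tsum_congr hstar
    _ = -(∑' k : ℤ, (starRingEnd ℂ) (fourierCoef (deriv f) k) * fourierCoef g k) := tsum_neg
    _ = -(r : ℂ) := by rw [← heq]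
  have : r = -r := by exact_mod_cast h2
  linarith

/-- self-adjointness transfer -/
theorem integral_mul_symm (c : ℤ → ℝ) (a b p q : ℝ → ℝ)
    (ha : Continuous a) (hap : Function.Periodic a 1)
    (hb : Continuous b) (hbp : Function.Periodic b 1)
    (hp : Continuous p) (hpp : Function.Periodic p 1)
    (hq : Continuous q) (hqp : Function.Periodic q 1)
    (hbc : ∀ k : ℤ, fourierCoef b k = (c k : ℂ) * fourierCoef a k)
    (hqc : ∀ k : ℤ, fourierCoef q k = (c k : ℂ) * fourierCoef p k) :
    ∫ x in (0:ℝ)..1, p x * b x = ∫ x in (0:ℝ)..1, a x * q x := by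
  obtain ⟨_, heq1⟩ := parseval hp hpp hb hbp
  obtain ⟨_, heq2⟩ := parseval ha hap hq hqp
  set L : ℝ := ∫ x in (0:ℝ)..1, p x * b x
  set R : ℝ := ∫ x in (0:ℝ)..1, a x * q x
  have key : (L : ℂ) = (starRingEnd ℂ) ((R : ℂ)) := by
    rw [heq1, heq2, starRingEnd_apply, tsum_star]
    apply tsum_congr
    intro k
    rw [hbc k, hqc k]
    simp only [star_mul', RCLike.star_def, map_mul, Complex.conj_conj, Complex.conj_ofReal]
    ring
  rw [Complex.conj_ofReal] at key
  exact_mod_cast key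

/-- lower bound by the zeroth coefficient -/
theorem sq_integral_le (c : ℤ → ℝ) (hc : ∀ k, 0 ≤ c k) (hc0 : c 0 = 1) (a b : ℝ → ℝ)
    (ha : Continuous a) (hap : Function.Periodic a 1)
    (hb : Continuous b) (hbp : Function.Periodic b 1)
    (hbc : ∀ k : ℤ, fourierCoef b k = (c k : ℂ) * fourierCoef a k) :
    (∫ x in (0:ℝ)..1, a x) ^ 2 ≤ ∫ x in (0:ℝ)..1, a x * b x := by
  obtain ⟨hsum, heq⟩ := parseval ha hap hb hbp
  have hterm : ∀ k : ℤ, (starRingEnd ℂ) (fourierCoef a k) * fourierCoef b k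
      = ((c k * Complex.normSq (fourierCoef a k) : ℝ) : ℂ) := by
    intro k
    rw [hbc k]
    push_cast
    rw [Complex.normSq_eq_conj_mul_self]
    ring
  have hsum' : Summable (fun k : ℤ => c k * Complex.normSq (fourierCoef a k)) := by
    have h1 : Summable (fun k : ℤ => ((c k * Complex.normSq (fourierCoef a k) : ℝ) : ℂ)) :=
      hsum.congr (fun k => hterm k)
    have h2 := h1.map Complex.reAddGroupHom Complex.continuous_re
    apply h2.congr
    intro k
    simp [Complex.reAddGroupHom]
  have hA : (∫ x in (0:ℝ)..1, a x * b x)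
      = ∑' k : ℤ, c k * Complex.normSq (fourierCoef a k) := by
    have : ((∫ x in (0:ℝ)..1, a x * b x : ℝ) : ℂ)
        = ((∑' k : ℤ, c k * Complex.normSq (fourierCoef a k) : ℝ) : ℂ) := by
      rw [heq, Complex.ofReal_tsum]
      exact tsum_congr hterm
    exact_mod_cast this
  have hle := Summable.le_tsum hsum' 0 (fun j _ => mul_nonneg (hc j) (Complex.normSq_nonneg _))
  rw [hA]
  have h0 : c 0 * Complex.normSq (fourierCoef a 0) = (∫ x in (0:ℝ)..1, a x) ^ 2 := by
    rw [hc0, fourierCoef_zero, Complex.normSq_ofReal]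
    ring
  rw [h0] at hle
  exact hle

/-- the Fourier coefficient of the time-derivative is the time derivative of the coefficient. -/
theorem fourierCoef_partial (u : ℝ → ℝ → ℝ) (hu : ContDiff ℝ (⊤ : ℕ∞) (Function.uncurry u))
    (hud : ∀ t x, HasDerivAt (fun τ => u τ x) (deriv (fun τ => u τ x) t) t)
    (hudc : Continuous (fun p : ℝ × ℝ => deriv (fun τ => u τ p.2) p.1))
    (t : ℝ) (k : ℤ) :
    HasDerivAt (fun τ => fourierCoef (u τ) k)
      (fourierCoef (fun x => deriv (fun τ => u τ x) t) k) t := by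
  have hexp : Continuous (fun x : ℝ =>
      Complex.exp (-2 * (π : ℂ) * Complex.I * (k : ℂ) * (x : ℂ))) := by
    apply Complex.continuous_exp.comp
    continuity
  exact hasDerivAt_param
    (fun τ x => ((u τ x : ℝ) : ℂ) * Complex.exp (-2 * (π : ℂ) * Complex.I * (k : ℂ) * (x : ℂ)))
    (fun τ x => ((deriv (fun σ => u σ x) τ : ℝ) : ℂ)
        * Complex.exp (-2 * (π : ℂ) * Complex.I * (k : ℂ) * (x : ℂ)))
    ((Complex.continuous_ofReal.comp hu.continuous).mul (hexp.comp continuous_snd))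
    ((Complex.continuous_ofReal.comp hudc).mul (hexp.comp continuous_snd))
    (fun τ x => ((hud τ x).ofReal_comp).mul_const _) t


end HsAux

theorem Hs_norm_apriori_bound (s : ℝ) (hs : 0 < s) (κ α : ℝ) (hκ : 0 ≤ κ)
    (u ρ m : ℝ → ℝ → ℝ)
    (hu : ContDiff ℝ (⊤ : ℕ∞) (Function.uncurry u)) (hρ : ContDiff ℝ (⊤ : ℕ∞) (Function.uncurry ρ))
    (hm : ContDiff ℝ (⊤ : ℕ∞) (Function.uncurry m))
    (hup : ∀ t, Function.Periodic (u t) 1) (hρp : ∀ t, Function.Periodic (ρ t) 1)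
    (hmp : ∀ t, Function.Periodic (m t) 1)
    (hmt : ∀ t x, deriv (fun τ => m τ x) t
      = α * deriv (u t) x - 2 * deriv (u t) x * m t x - u t x * deriv (m t) x
        - κ * ρ t x * deriv (ρ t) x)
    (hρt : ∀ t x, deriv (fun τ => ρ τ x) t
      = -(u t x) * deriv (ρ t) x - deriv (u t) x * ρ t x)
    (hAu : ∀ t, ∀ k : ℤ,
      fourierCoef (m t) k = ((1 + |(k : ℝ)| ^ 2) ^ s : ℝ) * fourierCoef (u t) k) :
    ∀ t : ℝ,
      3 / 4 * (∫ x in (0:ℝ)..1, u t x * m t x) + κ * (∫ x in (0:ℝ)..1, (ρ t x) ^ 2)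
        ≤ (∫ x in (0:ℝ)..1, u 0 x * m 0 x) + κ * (∫ x in (0:ℝ)..1, (ρ 0 x) ^ 2)
          - α * (∫ x in (0:ℝ)..1, u 0 x) + α ^ 2 := by
  obtain ⟨hud2, hud2c⟩ := HsAux.partial_snd u hu
  obtain ⟨hρd2, hρd2c⟩ := HsAux.partial_snd ρ hρ
  obtain ⟨hmd2, hmd2c⟩ := HsAux.partial_snd m hm
  obtain ⟨hud1, hud1c⟩ := HsAux.partial_fst u hu
  obtain ⟨hρd1, hρd1c⟩ := HsAux.partial_fst ρ hρ
  obtain ⟨hmd1, hmd1c⟩ := HsAux.partial_fst m hm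
  -- continuity of sections
  have hcu : ∀ t, Continuous (u t) :=
    fun t => hu.continuous.comp (continuous_const.prodMk continuous_id)
  have hcρ : ∀ t, Continuous (ρ t) :=
    fun t => hρ.continuous.comp (continuous_const.prodMk continuous_id)
  have hcm : ∀ t, Continuous (m t) :=
    fun t => hm.continuous.comp (continuous_const.prodMk continuous_id)
  have hcux : ∀ t, Continuous (fun x => deriv (u t) x) :=
    fun t => hud2c.comp (continuous_const.prodMk continuous_id)
  have hcρx : ∀ t, Continuous (fun x => deriv (ρ t) x) :=
    fun t => hρd2c.comp (continuous_const.prodMk continuous_id)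
  have hcmx : ∀ t, Continuous (fun x => deriv (m t) x) :=
    fun t => hmd2c.comp (continuous_const.prodMk continuous_id)
  have hcut : ∀ t, Continuous (fun x => deriv (fun τ => u τ x) t) :=
    fun t => hud1c.comp (continuous_const.prodMk continuous_id)
  have hcmt : ∀ t, Continuous (fun x => deriv (fun τ => m τ x) t) :=
    fun t => hmd1c.comp (continuous_const.prodMk continuous_id)
  -- smoothness of x-sections
  have hsu : ∀ t, ContDiff ℝ (⊤ : ℕ∞) (u t) :=
    fun t => hu.comp (contDiff_const.prodMk contDiff_id)
  -- x-periodicity of t-derivatives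
  have hput : ∀ t, Function.Periodic (fun x => deriv (fun τ => u τ x) t) 1 := by
    intro t x
    have h1 : (fun τ => u τ (x + 1)) = fun τ => u τ x := funext fun τ => hup τ x
    simp only [h1]
  have hpmt : ∀ t, Function.Periodic (fun x => deriv (fun τ => m τ x) t) 1 := by
    intro t x
    have h1 : (fun τ => m τ (x + 1)) = fun τ => m τ x := funext fun τ => hmp τ x
    simp only [h1]
  -- the multiplier
  have hc_nonneg : ∀ k : ℤ, 0 ≤ (1 + |(k : ℝ)| ^ 2) ^ s :=
    fun k => Real.rpow_nonneg (by positivity) s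
  have hc0 : (1 + |((0 : ℤ) : ℝ)| ^ 2) ^ s = 1 := by
    norm_num
  -- fourier coefficient of the time derivative of m
  have hmthat : ∀ t (k : ℤ), fourierCoef (fun x => deriv (fun τ => m τ x) t) k
      = (((1 + |(k : ℝ)| ^ 2) ^ s : ℝ) : ℂ) * fourierCoef (fun x => deriv (fun τ => u τ x) t) k := by
    intro t k
    have h2 := HsAux.fourierCoef_partial m hm hmd1 hmd1c t k
    have h3 : (fun τ => fourierCoef (m τ) k)
        = fun τ => (((1 + |(k : ℝ)| ^ 2) ^ s : ℝ) : ℂ) * fourierCoef (u τ) k :=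
      funext fun τ => hAu τ k
    rw [h3] at h2
    exact h2.unique ((HsAux.fourierCoef_partial u hu hud1 hud1c t k).const_mul _)
  -- Fourier consequences
  have r2 : ∀ t, ∫ x in (0:ℝ)..1, deriv (u t) x * m t x = 0 :=
    fun t => HsAux.integral_deriv_mul_eq_zero (fun k => (1 + |(k : ℝ)| ^ 2) ^ s) (u t) (m t)
      (hsu t) (hup t) (hcm t) (hmp t) (hAu t)
  have r1 : ∀ t, (∫ x in (0:ℝ)..1, deriv (fun τ => u τ x) t * m t x)
      = ∫ x in (0:ℝ)..1, u t x * deriv (fun τ => m τ x) t :=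
    fun t => HsAux.integral_mul_symm (fun k => (1 + |(k : ℝ)| ^ 2) ^ s) (u t) (m t)
      (fun x => deriv (fun τ => u τ x) t) (fun x => deriv (fun τ => m τ x) t)
      (hcu t) (hup t) (hcm t) (hmp t) (hcut t) (hput t) (hcmt t) (hpmt t) (hAu t) (hmthat t)
  have r3 : ∀ t, (∫ x in (0:ℝ)..1, u t x) ^ 2 ≤ ∫ x in (0:ℝ)..1, u t x * m t x :=
    fun t => HsAux.sq_integral_le (fun k => (1 + |(k : ℝ)| ^ 2) ^ s) hc_nonneg hc0 (u t) (m t)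
      (hcu t) (hup t) (hcm t) (hmp t) (hAu t)
  -- STEP d : ∫ u mₜ
  have hstepA : ∀ t, (∫ x in (0:ℝ)..1, u t x * deriv (fun τ => m τ x) t)
      = κ / 2 * ∫ x in (0:ℝ)..1, deriv (u t) x * (ρ t x) ^ 2 := by
    intro t
    set P : ℝ → ℝ := fun y => α / 2 * (u t y) ^ 2 - (u t y) ^ 2 * m t y
      - κ / 2 * (u t y * (ρ t y) ^ 2) with hPdef
    have hPd : ∀ x, HasDerivAt P
        (α / 2 * (2 * u t x * deriv (u t) x)
          - (2 * u t x * deriv (u t) x * m t x + (u t x) ^ 2 * deriv (m t) x)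
          - κ / 2 * (deriv (u t) x * (ρ t x) ^ 2 + u t x * (2 * ρ t x * deriv (ρ t) x))) x := by
      intro x
      have h1 := hud2 t x
      have h2 := hmd2 t x
      have h3 := hρd2 t x
      have e1 : HasDerivAt (fun y => (u t y) ^ 2) (2 * u t x * deriv (u t) x) x := by
        simpa using h1.fun_pow 2
      have e2 : HasDerivAt (fun y => (ρ t y) ^ 2) (2 * ρ t x * deriv (ρ t) x) x := by
        simpa using h3.fun_pow 2
      exact ((e1.const_mul (α / 2)).sub (e1.mul h2)).sub ((h1.mul e2).const_mul (κ / 2))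
    have hPcont : Continuous (fun x => deriv P x) := by
      have hfun : (fun x => deriv P x) = (fun x =>
          α / 2 * (2 * u t x * deriv (u t) x)
          - (2 * u t x * deriv (u t) x * m t x + (u t x) ^ 2 * deriv (m t) x)
          - κ / 2 * (deriv (u t) x * (ρ t x) ^ 2 + u t x * (2 * ρ t x * deriv (ρ t) x))) :=
        funext fun x => (hPd x).deriv
      rw [hfun]
      exact ((continuous_const.mul ((continuous_const.mul (hcu t)).mul (hcux t))).sub
        ((((continuous_const.mul (hcu t)).mul (hcux t)).mul (hcm t)).add
          (((hcu t).pow 2).mul (hcmx t)))).sub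
        (continuous_const.mul (((hcux t).mul ((hcρ t).pow 2)).add
          ((hcu t).mul ((continuous_const.mul (hcρ t)).mul (hcρx t)))))
    have hP10 : P 1 = P 0 := by
      have e1 : u t 1 = u t 0 := by simpa using hup t 0
      have e2 : m t 1 = m t 0 := by simpa using hmp t 0
      have e3 : ρ t 1 = ρ t 0 := by simpa using hρp t 0
      simp only [hPdef, e1, e2, e3]
    have hzero : ∫ x in (0:ℝ)..1, deriv P x = 0 :=
      HsAux.integral_deriv_periodic P (fun x => (hPd x).differentiableAt) hPcont hP10
    have hpoint : Set.EqOn (fun x => u t x * deriv (fun τ => m τ x) t)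
        (fun x => deriv P x + κ / 2 * (deriv (u t) x * (ρ t x) ^ 2)) (Set.uIcc (0:ℝ) 1) := by
      intro x _
      simp only
      rw [(hPd x).deriv, hmt t x]
      ring
    rw [intervalIntegral.integral_congr hpoint,
      intervalIntegral.integral_add (hPcont.intervalIntegrable 0 1)
        ((continuous_const.fun_mul ((hcux t).fun_mul ((hcρ t).fun_pow 2))).intervalIntegrable 0 1),
      hzero, intervalIntegral.integral_const_mul, zero_add]
  -- STEP ρ : ∫ 2 ρ ρₜ
  have hstepR : ∀ t, (∫ x in (0:ℝ)..1, 2 * ρ t x * deriv (fun τ => ρ τ x) t)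
      = -(∫ x in (0:ℝ)..1, deriv (u t) x * (ρ t x) ^ 2) := by
    intro t
    set Q : ℝ → ℝ := fun y => -(u t y * (ρ t y) ^ 2) with hQdef
    have hQd : ∀ x, HasDerivAt Q
        (-(deriv (u t) x * (ρ t x) ^ 2 + u t x * (2 * ρ t x * deriv (ρ t) x))) x := by
      intro x
      have h1 := hud2 t x
      have h3 := hρd2 t x
      have e2 : HasDerivAt (fun y => (ρ t y) ^ 2) (2 * ρ t x * deriv (ρ t) x) x := by
        simpa using h3.fun_pow 2
      exact (h1.mul e2).neg
    have hQcont : Continuous (fun x => deriv Q x) := by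
      have hfun : (fun x => deriv Q x) = (fun x =>
          -(deriv (u t) x * (ρ t x) ^ 2 + u t x * (2 * ρ t x * deriv (ρ t) x))) :=
        funext fun x => (hQd x).deriv
      rw [hfun]
      exact (((hcux t).mul ((hcρ t).pow 2)).add
        ((hcu t).mul ((continuous_const.mul (hcρ t)).mul (hcρx t)))).neg
    have hQ10 : Q 1 = Q 0 := by
      have e1 : u t 1 = u t 0 := by simpa using hup t 0
      have e3 : ρ t 1 = ρ t 0 := by simpa using hρp t 0
      simp only [hQdef, e1, e3]
    have hzero : ∫ x in (0:ℝ)..1, deriv Q x = 0 :=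
      HsAux.integral_deriv_periodic Q (fun x => (hQd x).differentiableAt) hQcont hQ10
    have hpoint : Set.EqOn (fun x => 2 * ρ t x * deriv (fun τ => ρ τ x) t)
        (fun x => deriv Q x - deriv (u t) x * (ρ t x) ^ 2) (Set.uIcc (0:ℝ) 1) := by
      intro x _
      simp only
      rw [(hQd x).deriv, hρt t x]
      ring
    rw [intervalIntegral.integral_congr hpoint,
      intervalIntegral.integral_sub (hQcont.intervalIntegrable 0 1)
        (((hcux t).fun_mul ((hcρ t).fun_pow 2)).intervalIntegrable 0 1),
      hzero, zero_sub]
  -- STEP m : ∫ mₜ = 0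
  have hstepM : ∀ t, (∫ x in (0:ℝ)..1, deriv (fun τ => m τ x) t) = 0 := by
    intro t
    set Q : ℝ → ℝ := fun y => α * u t y - u t y * m t y - κ / 2 * (ρ t y) ^ 2 with hQdef
    have hQd : ∀ x, HasDerivAt Q
        (α * deriv (u t) x - (deriv (u t) x * m t x + u t x * deriv (m t) x)
          - κ / 2 * (2 * ρ t x * deriv (ρ t) x)) x := by
      intro x
      have h1 := hud2 t x
      have h2 := hmd2 t x
      have h3 := hρd2 t x
      have e2 : HasDerivAt (fun y => (ρ t y) ^ 2) (2 * ρ t x * deriv (ρ t) x) x := by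
        simpa using h3.fun_pow 2
      exact ((h1.const_mul α).sub (h1.mul h2)).sub (e2.const_mul (κ / 2))
    have hQcont : Continuous (fun x => deriv Q x) := by
      have hfun : (fun x => deriv Q x) = (fun x =>
          α * deriv (u t) x - (deriv (u t) x * m t x + u t x * deriv (m t) x)
          - κ / 2 * (2 * ρ t x * deriv (ρ t) x)) :=
        funext fun x => (hQd x).deriv
      rw [hfun]
      exact ((continuous_const.mul (hcux t)).sub (((hcux t).mul (hcm t)).add
        ((hcu t).mul (hcmx t)))).sub
        (continuous_const.mul ((continuous_const.mul (hcρ t)).mul (hcρx t)))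
    have hQ10 : Q 1 = Q 0 := by
      have e1 : u t 1 = u t 0 := by simpa using hup t 0
      have e2 : m t 1 = m t 0 := by simpa using hmp t 0
      have e3 : ρ t 1 = ρ t 0 := by simpa using hρp t 0
      simp only [hQdef, e1, e2, e3]
    have hzero : ∫ x in (0:ℝ)..1, deriv Q x = 0 :=
      HsAux.integral_deriv_periodic Q (fun x => (hQd x).differentiableAt) hQcont hQ10
    have hpoint : Set.EqOn (fun x => deriv (fun τ => m τ x) t)
        (fun x => deriv Q x - deriv (u t) x * m t x) (Set.uIcc (0:ℝ) 1) := by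
      intro x _
      simp only
      rw [(hQd x).deriv, hmt t x]
      ring
    rw [intervalIntegral.integral_congr hpoint,
      intervalIntegral.integral_sub (hQcont.intervalIntegrable 0 1)
        (((hcux t).fun_mul (hcm t)).intervalIntegrable 0 1),
      hzero, r2 t, zero_sub, neg_zero]
  -- derivative of A
  have hA : ∀ t, HasDerivAt (fun τ => ∫ x in (0:ℝ)..1, u τ x * m τ x)
      (κ * ∫ x in (0:ℝ)..1, deriv (u t) x * (ρ t x) ^ 2) t := by
    intro t
    have h0 := HsAux.hasDerivAt_param (fun τ x => u τ x * m τ x)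
      (fun τ x => deriv (fun σ => u σ x) τ * m τ x + u τ x * deriv (fun σ => m σ x) τ)
      (hu.continuous.mul hm.continuous)
      ((hud1c.mul hm.continuous).add (hu.continuous.mul hmd1c))
      (fun τ x => (hud1 τ x).mul (hmd1 τ x)) t
    have hval : (∫ x in (0:ℝ)..1,
        (deriv (fun σ => u σ x) t * m t x + u t x * deriv (fun σ => m σ x) t))
        = κ * ∫ x in (0:ℝ)..1, deriv (u t) x * (ρ t x) ^ 2 := by
      rw [intervalIntegral.integral_add (((hcut t).fun_mul (hcm t)).intervalIntegrable 0 1)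
        (((hcu t).fun_mul (hcmt t)).intervalIntegrable 0 1), r1 t, hstepA t]
      ring
    rw [hval] at h0
    exact h0
  -- derivative of R
  have hR : ∀ t, HasDerivAt (fun τ => ∫ x in (0:ℝ)..1, (ρ τ x) ^ 2)
      (-(∫ x in (0:ℝ)..1, deriv (u t) x * (ρ t x) ^ 2)) t := by
    intro t
    have h0 := HsAux.hasDerivAt_param (fun τ x => (ρ τ x) ^ 2)
      (fun τ x => 2 * ρ τ x * deriv (fun σ => ρ σ x) τ)
      (hρ.continuous.fun_pow 2)
      ((continuous_const.fun_mul hρ.continuous).fun_mul hρd1c)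
      (fun τ x => by simpa using (hρd1 τ x).fun_pow 2) t
    rw [hstepR t] at h0
    exact h0
  -- derivative of ∫ m
  have hM : ∀ t, HasDerivAt (fun τ => ∫ x in (0:ℝ)..1, m τ x) 0 t := by
    intro t
    have h0 := HsAux.hasDerivAt_param m (fun τ x => deriv (fun σ => m σ x) τ)
      hm.continuous hmd1c hmd1 t
    rw [hstepM t] at h0
    exact h0
  -- energy conservation
  have hE : ∀ t, ((∫ x in (0:ℝ)..1, u t x * m t x) + κ * ∫ x in (0:ℝ)..1, (ρ t x) ^ 2)
      = (∫ x in (0:ℝ)..1, u 0 x * m 0 x) + κ * ∫ x in (0:ℝ)..1, (ρ 0 x) ^ 2 := by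
    have hE0 : ∀ τ, HasDerivAt (fun σ => (∫ x in (0:ℝ)..1, u σ x * m σ x)
        + κ * ∫ x in (0:ℝ)..1, (ρ σ x) ^ 2) 0 τ := by
      intro τ
      have := (hA τ).fun_add ((hR τ).const_mul κ)
      simpa using this
    intro t
    exact is_const_of_deriv_eq_zero (fun τ => (hE0 τ).differentiableAt)
      (fun τ => (hE0 τ).deriv) t 0
  -- conservation of ∫ u
  have hI : ∀ t, (∫ x in (0:ℝ)..1, u t x) = ∫ x in (0:ℝ)..1, u 0 x := by
    have hIM : ∀ t, (∫ x in (0:ℝ)..1, u t x) = ∫ x in (0:ℝ)..1, m t x := by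
      intro t
      have h1 := hAu t 0
      rw [HsAux.fourierCoef_zero, HsAux.fourierCoef_zero, hc0] at h1
      simp only [Complex.ofReal_one, one_mul] at h1
      exact_mod_cast h1.symm
    have hMc : ∀ t, (∫ x in (0:ℝ)..1, m t x) = ∫ x in (0:ℝ)..1, m 0 x := fun t =>
      is_const_of_deriv_eq_zero (fun τ => (hM τ).differentiableAt)
        (fun τ => (hM τ).deriv) t 0
    intro t
    rw [hIM t, hMc t, ← hIM 0]
  -- conclusion
  intro t
  have e1 := hE t
  have e3 := r3 t
  rw [← hI t]
  nlinarith [sq_nonneg (α - (∫ x in (0:ℝ)..1, u t x) / 2)]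
end

section
/- For every n ∈ ℕ there exists a constant C > 0 such that for all smooth 1-periodic functions f, g, h : ℝ → ℝ: |∫₀¹ (fg)^{(n+1)}(x) h^{(n+1)}(x) dx| ≤ C ‖f‖_{H^n} ‖g‖_{H^{n+1}} ‖h‖_{H^{n+1}} + |∫₀¹ f(x) g^{(n+1)}(x) h^{(n+1)}(x) dx| + |∫₀¹ f^{(n+1)}(x) g(x) h^{(n+1)}(x) dx|. -/
open MeasureTheory Real

/-- Squared `L²(0,1)`-norm of a (`1`-periodic) function. -/
noncomputable def L2Sq (f : ℝ → ℝ) : ℝ := ∫ x in (0:ℝ)..1, (f x) ^ 2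

/-- Squared Sobolev `Hⁿ`-norm: `‖f‖_{Hⁿ}² = ∑_{j=0}^n ∫₀¹ (f⁽ʲ⁾)²`. -/
noncomputable def HSq (n : ℕ) (f : ℝ → ℝ) : ℝ :=
  ∑ j ∈ Finset.range (n + 1), ∫ x in (0:ℝ)..1, (iteratedDeriv j f x) ^ 2

/-- Sobolev `Hⁿ`-norm. -/
noncomputable def HNorm (n : ℕ) (f : ℝ → ℝ) : ℝ := Real.sqrt (HSq n f)

/-- Sup-norm `‖f‖_∞ = sup_x |f x|`. -/
noncomputable def supNorm (f : ℝ → ℝ) : ℝ := ⨆ x : ℝ, |f x|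

open Finset intervalIntegral

section Aux

theorem smoothIter {f : ℝ → ℝ} (hf : ContDiff ℝ (⊤ : ℕ∞) f) (k : ℕ) :
    ContDiff ℝ (⊤:ℕ∞) (iteratedDeriv k f) := by
  rw [iteratedDeriv_eq_iterate]
  exact ContDiff.iterate_deriv k (hf.of_le (by simp))

theorem my_leibniz (n : ℕ) (f g : ℝ → ℝ) (hf : ContDiff ℝ (⊤ : ℕ∞) f) (hg : ContDiff ℝ (⊤ : ℕ∞) g) :
    iteratedDeriv n (fun y => f y * g y) =
      fun x => ∑ k ∈ Finset.range (n + 1),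
        (n.choose k : ℝ) * (iteratedDeriv k f x * iteratedDeriv (n - k) g x) := by
  induction n with
  | zero => simp
  | succ n ih =>
    rw [iteratedDeriv_succ, ih]
    funext x
    have hdf : ∀ k, Differentiable ℝ (iteratedDeriv k f) := fun k => (smoothIter hf k).differentiable (by simp)
    have hdg : ∀ k, Differentiable ℝ (iteratedDeriv k g) := fun k => (smoothIter hg k).differentiable (by simp)
    rw [deriv_fun_sum (fun k _ => by
      exact (((hdf k).differentiableAt.mul (hdg (n-k)).differentiableAt).const_mul _))]
    have hterm : ∀ k ∈ Finset.range (n+1),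
        deriv (fun x => (n.choose k : ℝ) * (iteratedDeriv k f x * iteratedDeriv (n - k) g x)) x
        = (n.choose k : ℝ) * (iteratedDeriv (k+1) f x * iteratedDeriv (n - k) g x)
          + (n.choose k : ℝ) * (iteratedDeriv k f x * iteratedDeriv (n + 1 - k) g x) := by
      intro k hk
      rw [deriv_const_mul _ ((hdf k).differentiableAt.fun_mul (hdg (n-k)).differentiableAt),
        deriv_fun_mul (hdf k).differentiableAt (hdg (n-k)).differentiableAt]
      have hk' : k ≤ n := by simpa using Nat.lt_succ_iff.mp (Finset.mem_range.mp hk)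
      rw [← iteratedDeriv_succ, ← iteratedDeriv_succ]
      have : n - k + 1 = n + 1 - k := by omega
      rw [this]
      ring
    rw [Finset.sum_congr rfl hterm, Finset.sum_add_distrib]
    set T : ℕ → ℝ := fun j => iteratedDeriv j f x * iteratedDeriv (n + 1 - j) g x with hT
    have key : (∑ k ∈ range (n+1), (n.choose k : ℝ) * T (k+1))
          + (∑ k ∈ range (n+1), (n.choose k : ℝ) * T k)
        = ∑ k ∈ range (n+2), ((n+1).choose k : ℝ) * T k := by
      rw [Finset.sum_range_succ' (fun k => ((n+1).choose k : ℝ) * T k) (n+1)]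
      rw [Finset.sum_range_succ' (fun k => (n.choose k : ℝ) * T k) n]
      have h1 : ∑ k ∈ range (n+1), ((n+1).choose (k+1) : ℝ) * T (k+1)
          = ∑ k ∈ range (n+1), ((n.choose k : ℝ) * T (k+1) + (n.choose (k+1) : ℝ) * T (k+1)) := by
        refine Finset.sum_congr rfl fun k _ => ?_
        rw [Nat.choose_succ_succ]
        push_cast; ring
      rw [h1, Finset.sum_add_distrib]
      rw [Finset.sum_range_succ (fun k => (n.choose (k+1) : ℝ) * T (k+1)) n]
      simp [Nat.choose_succ_self]
      ring
    have e1 : ∑ k ∈ range (n+1), (n.choose k:ℝ) * (iteratedDeriv (k+1) f x * iteratedDeriv (n-k) g x)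
        = ∑ k ∈ range (n+1), (n.choose k : ℝ) * T (k+1) := by
      refine Finset.sum_congr rfl fun k _ => ?_
      simp [hT, Nat.succ_sub_succ]
    have e2 : ∑ k ∈ range (n+1), (n.choose k:ℝ) * (iteratedDeriv k f x * iteratedDeriv (n+1-k) g x)
        = ∑ k ∈ range (n+1), (n.choose k : ℝ) * T k := rfl
    rw [e1, e2, key]

theorem myCS {u v : ℝ → ℝ} (hu : Continuous u) (hv : Continuous v) :
    ∫ x in (0:ℝ)..1, |u x * v x| ≤
      Real.sqrt (∫ x in (0:ℝ)..1, u x ^ 2) * Real.sqrt (∫ x in (0:ℝ)..1, v x ^ 2) := by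
  set A := ∫ x in (0:ℝ)..1, u x ^ 2 with hA
  set C := ∫ x in (0:ℝ)..1, v x ^ 2 with hC
  set B := ∫ x in (0:ℝ)..1, |u x * v x| with hB
  have hiu : IntervalIntegrable (fun x => u x ^ 2) volume 0 1 := (hu.pow 2).intervalIntegrable 0 1
  have hiv : IntervalIntegrable (fun x => v x ^ 2) volume 0 1 := (hv.pow 2).intervalIntegrable 0 1
  have hiuv : IntervalIntegrable (fun x => |u x * v x|) volume 0 1 :=
    ((hu.mul hv).abs).intervalIntegrable 0 1
  have hB0 : 0 ≤ B := intervalIntegral.integral_nonneg (by norm_num) (fun x _ => abs_nonneg _)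
  have hA0 : 0 ≤ A := intervalIntegral.integral_nonneg (by norm_num) (fun x _ => sq_nonneg _)
  have hC0 : 0 ≤ C := intervalIntegral.integral_nonneg (by norm_num) (fun x _ => sq_nonneg _)
  have hquad : ∀ t : ℝ, 0 ≤ C * (t * t) + (-2 * B) * t + A := by
    intro t
    have h1 : 0 ≤ ∫ x in (0:ℝ)..1, (t * |v x| - |u x|) ^ 2 :=
      intervalIntegral.integral_nonneg (by norm_num) (fun x _ => sq_nonneg _)
    have h2 : ∫ x in (0:ℝ)..1, (t * |v x| - |u x|) ^ 2
        = C * (t * t) + (-2 * B) * t + A := by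
      have : ∀ x : ℝ, (t * |v x| - |u x|) ^ 2
          = t * t * v x ^ 2 + (-2 * t) * |u x * v x| + u x ^ 2 := by
        intro x
        rw [abs_mul]
        have h3 : |u x| ^ 2 = u x ^ 2 := sq_abs _
        have h4 : |v x| ^ 2 = v x ^ 2 := sq_abs _
        nlinarith [sq_abs (u x), sq_abs (v x)]
      simp_rw [this]
      rw [intervalIntegral.integral_add (((hiv.const_mul _).add (hiuv.const_mul _))) ?_,
        intervalIntegral.integral_add (hiv.const_mul _) (hiuv.const_mul _),
        intervalIntegral.integral_const_mul, intervalIntegral.integral_const_mul]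
      · rw [hA, hB, hC]; ring
      · exact hiu
    linarith [h2 ▸ h1]
  have hdisc := discrim_le_zero hquad
  rw [discrim] at hdisc
  have hBsq : B ^ 2 ≤ A * C := by nlinarith
  calc B = Real.sqrt (B ^ 2) := by rw [Real.sqrt_sq hB0]
    _ ≤ Real.sqrt (A * C) := Real.sqrt_le_sqrt hBsq
    _ = Real.sqrt A * Real.sqrt C := Real.sqrt_mul hA0 _

theorem mySup {u : ℝ → ℝ} (hu : ContDiff ℝ (⊤:ℕ∞) u) {x : ℝ} (hx : x ∈ Set.Icc (0:ℝ) 1) :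
    |u x| ≤ Real.sqrt (∫ y in (0:ℝ)..1, u y ^ 2) + Real.sqrt (∫ y in (0:ℝ)..1, deriv u y ^ 2) := by
  have hc : Continuous u := hu.continuous
  have hd : Differentiable ℝ u := hu.differentiable (by simp)
  have hdc : Continuous (deriv u) := (hu.iterate_deriv 1).continuous
  set A := Real.sqrt (∫ y in (0:ℝ)..1, u y ^ 2) with hAdef
  set D := Real.sqrt (∫ y in (0:ℝ)..1, deriv u y ^ 2) with hDdef
  -- min point
  obtain ⟨y, hy, hymin⟩ := (isCompact_Icc (a := (0:ℝ)) (b := 1)).exists_isMinOn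
    (Set.nonempty_Icc.mpr (by norm_num)) ((hc.pow 2).continuousOn)
  have hy2 : u y ^ 2 ≤ ∫ t in (0:ℝ)..1, u t ^ 2 := by
    calc u y ^ 2 = ∫ t in (0:ℝ)..1, u y ^ 2 := by simp
      _ ≤ ∫ t in (0:ℝ)..1, u t ^ 2 := by
          apply intervalIntegral.integral_mono_on (by norm_num)
            (intervalIntegrable_const) ((hc.pow 2).intervalIntegrable 0 1)
          intro t ht; exact hymin ht
  -- FTC
  have hderiv : ∀ t ∈ Set.uIcc y x, HasDerivAt (fun s => u s ^ 2) (2 * u t * deriv u t) t := by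
    intro t _
    have := ((hd t).hasDerivAt).fun_pow 2
    simpa [mul_comm, mul_assoc, mul_left_comm] using this
  have hint : IntervalIntegrable (fun t => 2 * u t * deriv u t) volume y x :=
    (((continuous_const.mul hc).mul hdc)).intervalIntegrable y x
  have hftc : ∫ t in y..x, 2 * u t * deriv u t = u x ^ 2 - u y ^ 2 :=
    intervalIntegral.integral_eq_sub_of_hasDerivAt hderiv hint
  -- bound the FTC integral
  set w : ℝ → ℝ := fun t => 2 * |u t| * |deriv u t| with hw
  have hwc : Continuous w := (continuous_const.mul hc.abs).mul hdc.abs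
  have habs : |∫ t in y..x, 2 * u t * deriv u t| ≤ ∫ t in (0:ℝ)..1, 2 * |u t * deriv u t| := by
    have h1 : |∫ t in y..x, 2 * u t * deriv u t| ≤ |∫ t in y..x, w t| := by
      have := intervalIntegral.norm_integral_le_abs_integral_norm
          (f := fun t => 2 * u t * deriv u t) (a := y) (b := x) (μ := volume)
      simpa [Real.norm_eq_abs, hw] using this
    have h2 : |∫ t in y..x, w t| ≤ |∫ t in (0:ℝ)..1, w t| := by
      apply intervalIntegral.abs_integral_mono_interval
      · apply Set.uIoc_subset_uIoc_of_uIcc_subset_uIcc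
        rw [Set.uIcc_of_le (by norm_num : (0:ℝ) ≤ 1)]
        exact Set.uIcc_subset_Icc hy hx
      · exact Filter.Eventually.of_forall (fun t => by simp only [hw]; positivity)
      · exact hwc.intervalIntegrable 0 1
    have h3 : |∫ t in (0:ℝ)..1, w t| = ∫ t in (0:ℝ)..1, 2 * |u t * deriv u t| := by
      rw [abs_of_nonneg (intervalIntegral.integral_nonneg (by norm_num)
        (fun t _ => by simp only [hw]; positivity))]
      congr 1; funext t
      simp only [hw]
      rw [abs_mul, mul_assoc]
    calc |∫ t in y..x, 2 * u t * deriv u t| ≤ _ := h1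
      _ ≤ _ := h2
      _ = _ := h3
  have hcs : ∫ t in (0:ℝ)..1, 2 * |u t * deriv u t| ≤ 2 * (A * D) := by
    rw [intervalIntegral.integral_const_mul]
    have := myCS hc hdc
    linarith
  have hA2 : A ^ 2 = ∫ t in (0:ℝ)..1, u t ^ 2 :=
    Real.sq_sqrt (intervalIntegral.integral_nonneg (by norm_num) (fun t _ => sq_nonneg _))
  have hsq : u x ^ 2 ≤ (A + D) ^ 2 := by
    have h5 : u x ^ 2 - u y ^ 2 ≤ 2 * (A * D) := by
      rw [← hftc]; exact le_trans (le_abs_self _) (le_trans habs hcs)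
    have hD0 : 0 ≤ D := Real.sqrt_nonneg _
    have hA0 : 0 ≤ A := Real.sqrt_nonneg _
    nlinarith [sq_nonneg D, hy2, hA2]
  calc |u x| = Real.sqrt (u x ^ 2) := (Real.sqrt_sq_eq_abs _).symm
    _ ≤ Real.sqrt ((A + D) ^ 2) := Real.sqrt_le_sqrt hsq
    _ = A + D := by
        rw [Real.sqrt_sq (by positivity)]

theorem sqrt_int_le_HNorm (f : ℝ → ℝ) {k m : ℕ} (hk : k ≤ m) :
    Real.sqrt (∫ x in (0:ℝ)..1, (iteratedDeriv k f x) ^ 2) ≤ HNorm m f := by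
  apply Real.sqrt_le_sqrt
  exact Finset.single_le_sum (f := fun j => ∫ x in (0:ℝ)..1, (iteratedDeriv j f x) ^ 2)
    (fun j _ => intervalIntegral.integral_nonneg (by norm_num) fun x _ => sq_nonneg _)
    (Finset.mem_range.mpr (Nat.lt_succ_of_le hk))

theorem HNorm_nonneg (m : ℕ) (f : ℝ → ℝ) : 0 ≤ HNorm m f := Real.sqrt_nonneg _

theorem sup_iter_le {f : ℝ → ℝ} (hf : ContDiff ℝ (⊤ : ℕ∞) f) {k m : ℕ} (hk : k + 1 ≤ m) {x : ℝ}
    (hx : x ∈ Set.Icc (0:ℝ) 1) : |iteratedDeriv k f x| ≤ 2 * HNorm m f := by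
  have h := mySup (u := iteratedDeriv k f) (smoothIter hf k) hx
  rw [show deriv (iteratedDeriv k f) = iteratedDeriv (k+1) f from (iteratedDeriv_succ).symm] at h
  have h1 := sqrt_int_le_HNorm f (k := k) (m := m) (le_trans (Nat.le_succ k) hk)
  have h2 := sqrt_int_le_HNorm f (k := k+1) (m := m) hk
  linarith

theorem triple_bound {a b c : ℝ → ℝ} (ha : Continuous a) (hb : Continuous b) (hc : Continuous c)
    {M : ℝ} (hM : ∀ x ∈ Set.Icc (0:ℝ) 1, |a x| ≤ M) :
    ∫ x in (0:ℝ)..1, |a x * (b x * c x)| ≤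
      M * (Real.sqrt (∫ x in (0:ℝ)..1, b x ^ 2) * Real.sqrt (∫ x in (0:ℝ)..1, c x ^ 2)) := by
  have hM0 : 0 ≤ M := le_trans (abs_nonneg _) (hM 0 (by norm_num))
  have h1 : ∫ x in (0:ℝ)..1, |a x * (b x * c x)| ≤ ∫ x in (0:ℝ)..1, M * |b x * c x| := by
    apply intervalIntegral.integral_mono_on (by norm_num)
      ((ha.mul (hb.mul hc)).abs.intervalIntegrable 0 1)
      ((continuous_const.mul (hb.mul hc).abs).intervalIntegrable 0 1)
    intro x hx
    simp only [Pi.mul_apply]; rw [abs_mul]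
    exact mul_le_mul_of_nonneg_right (hM x hx) (abs_nonneg _)
  rw [intervalIntegral.integral_const_mul] at h1
  exact le_trans h1 (mul_le_mul_of_nonneg_left (myCS hb hc) hM0)

end Aux

theorem leibniz_integral_estimate (n : ℕ) :
    ∃ C > 0, ∀ f g h : ℝ → ℝ,
      ContDiff ℝ (⊤ : ℕ∞) f → ContDiff ℝ (⊤ : ℕ∞) g → ContDiff ℝ (⊤ : ℕ∞) h →
      Function.Periodic f 1 → Function.Periodic g 1 → Function.Periodic h 1 →
      |∫ x in (0:ℝ)..1, iteratedDeriv (n + 1) (fun y => f y * g y) x * iteratedDeriv (n + 1) h x|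
        ≤ C * HNorm n f * HNorm (n + 1) g * HNorm (n + 1) h
          + |∫ x in (0:ℝ)..1, f x * iteratedDeriv (n + 1) g x * iteratedDeriv (n + 1) h x|
          + |∫ x in (0:ℝ)..1, iteratedDeriv (n + 1) f x * g x * iteratedDeriv (n + 1) h x| := by
  refine ⟨((n:ℝ) + 1) * 2 ^ (n + 2), by positivity, ?_⟩
  intro f g h hf hg hh _ _ _
  have cf : ∀ k, Continuous (iteratedDeriv k f) := fun k => (smoothIter hf k).continuous
  have cg : ∀ k, Continuous (iteratedDeriv k g) := fun k => (smoothIter hg k).continuous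
  have ch : ∀ k, Continuous (iteratedDeriv k h) := fun k => (smoothIter hh k).continuous
  set P := HNorm n f * HNorm (n + 1) g * HNorm (n + 1) h with hP
  have hP0 : 0 ≤ P :=
    mul_nonneg (mul_nonneg (HNorm_nonneg _ _) (HNorm_nonneg _ _)) (HNorm_nonneg _ _)
  set I : ℕ → ℝ := fun k => ∫ x in (0:ℝ)..1,
      ((n+1).choose k : ℝ) * (iteratedDeriv k f x * iteratedDeriv (n + 1 - k) g x)
        * iteratedDeriv (n+1) h x with hI
  have hsplit : (∫ x in (0:ℝ)..1,
      iteratedDeriv (n + 1) (fun y => f y * g y) x * iteratedDeriv (n + 1) h x)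
      = ∑ k ∈ Finset.range (n + 2), I k := by
    simp only [my_leibniz (n+1) f g hf hg, Finset.sum_mul, hI]
    exact intervalIntegral.integral_finset_sum (fun k _ =>
      ((continuous_const.mul ((cf k).mul (cg _))).mul (ch _)).intervalIntegrable 0 1)
  have hpeel : ∑ k ∈ Finset.range (n + 2), I k
      = (∑ k ∈ Finset.range n, I (k+1) + I 0) + I (n+1) := by
    rw [Finset.sum_range_succ, Finset.sum_range_succ']
  -- identify the endpoint terms
  have hI0 : I 0 = ∫ x in (0:ℝ)..1, f x * iteratedDeriv (n + 1) g x * iteratedDeriv (n + 1) h x := by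
    simp only [hI, Nat.choose_zero_right, Nat.cast_one, iteratedDeriv_zero, Nat.sub_zero, one_mul]
  have hIn : I (n+1)
      = ∫ x in (0:ℝ)..1, iteratedDeriv (n + 1) f x * g x * iteratedDeriv (n + 1) h x := by
    simp only [hI, Nat.choose_self, Nat.cast_one, Nat.sub_self, iteratedDeriv_zero, one_mul]
  -- bound on middle terms
  have hmid : ∀ k ∈ Finset.range n, |I (k+1)| ≤ (2:ℝ) ^ (n+1) * (2 * P) := by
    intro k hk
    have hk' : k + 1 ≤ n := Finset.mem_range.mp hk
    set c : ℝ := ((n+1).choose (k+1) : ℝ) with hc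
    have hc0 : 0 ≤ c := by positivity
    have hcle : c ≤ (2:ℝ) ^ (n+1) := by
      rw [hc]
      have : (n+1).choose (k+1) ≤ 2 ^ (n+1) := by
        calc (n+1).choose (k+1) ≤ ∑ j ∈ Finset.range (n+2), (n+1).choose j :=
              Finset.single_le_sum (fun j _ => Nat.zero_le _)
                (Finset.mem_range.mpr (by omega))
          _ = 2 ^ (n+1) := Nat.sum_range_choose (n+1)
      exact_mod_cast this
    -- |I (k+1)| ≤ c * ∫ |f^{(k+1)} (g^{(n-k)} h^{(n+1)})|
    have step1 : |I (k+1)| ≤ c * ∫ x in (0:ℝ)..1,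
        |iteratedDeriv (k+1) f x * (iteratedDeriv (n - k) g x * iteratedDeriv (n+1) h x)| := by
      have e1 : |I (k+1)| ≤ ∫ x in (0:ℝ)..1,
          |c * (iteratedDeriv (k+1) f x * iteratedDeriv (n + 1 - (k+1)) g x)
            * iteratedDeriv (n+1) h x| :=
        intervalIntegral.abs_integral_le_integral_abs (by norm_num)
      have e2 : ∀ x : ℝ, |c * (iteratedDeriv (k+1) f x * iteratedDeriv (n + 1 - (k+1)) g x)
            * iteratedDeriv (n+1) h x|
          = c * |iteratedDeriv (k+1) f x * (iteratedDeriv (n - k) g x * iteratedDeriv (n+1) h x)| := by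
        intro x
        have hnk : n + 1 - (k+1) = n - k := by omega
        rw [hnk]
        simp only [abs_mul, abs_of_nonneg hc0]
        ring
      calc |I (k+1)| ≤ _ := e1
        _ = c * ∫ x in (0:ℝ)..1,
            |iteratedDeriv (k+1) f x * (iteratedDeriv (n - k) g x * iteratedDeriv (n+1) h x)| := by
          simp_rw [e2]
          exact intervalIntegral.integral_const_mul _ _
    have step2 : (∫ x in (0:ℝ)..1,
        |iteratedDeriv (k+1) f x * (iteratedDeriv (n - k) g x * iteratedDeriv (n+1) h x)|)
        ≤ 2 * P := by
      by_cases hcase : k + 2 ≤ n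
      · -- sup bound on f^{(k+1)}
        have hb := triple_bound (cf (k+1)) (cg (n-k)) (ch (n+1))
          (M := 2 * HNorm n f) (fun x hx => sup_iter_le hf (by omega) hx)
        refine le_trans hb ?_
        have hsg := sqrt_int_le_HNorm g (k := n - k) (m := n + 1) (by omega)
        have hsh := sqrt_int_le_HNorm h (k := n + 1) (m := n + 1) le_rfl
        have h1 : Real.sqrt (∫ x in (0:ℝ)..1, (iteratedDeriv (n-k) g x) ^ 2)
            * Real.sqrt (∫ x in (0:ℝ)..1, (iteratedDeriv (n+1) h x) ^ 2)
            ≤ HNorm (n+1) g * HNorm (n+1) h :=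
          mul_le_mul hsg hsh (Real.sqrt_nonneg _) (HNorm_nonneg _ _)
        calc 2 * HNorm n f * _ ≤ 2 * HNorm n f * (HNorm (n+1) g * HNorm (n+1) h) :=
              mul_le_mul_of_nonneg_left h1
                (by have := HNorm_nonneg n f; linarith)
          _ = 2 * P := by rw [hP]; ring
      · -- k + 1 = n, so n - k = 1 : sup bound on g'
        have hkn : k + 1 = n := by omega
        have hnk1 : n - k = 1 := by omega
        have e3 : ∀ x : ℝ, iteratedDeriv (k+1) f x
              * (iteratedDeriv (n - k) g x * iteratedDeriv (n+1) h x)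
            = iteratedDeriv (n-k) g x * (iteratedDeriv (k+1) f x * iteratedDeriv (n+1) h x) := by
          intro x; ring
        simp_rw [e3]
        have hb := triple_bound (cg (n-k)) (cf (k+1)) (ch (n+1))
          (M := 2 * HNorm (n+1) g)
          (fun x hx => by
            rw [hnk1]
            exact sup_iter_le hg (by omega) hx)
        refine le_trans hb ?_
        have hsf := sqrt_int_le_HNorm f (k := k + 1) (m := n) (by omega)
        have hsh := sqrt_int_le_HNorm h (k := n + 1) (m := n + 1) le_rfl
        have h1 : Real.sqrt (∫ x in (0:ℝ)..1, (iteratedDeriv (k+1) f x) ^ 2)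
            * Real.sqrt (∫ x in (0:ℝ)..1, (iteratedDeriv (n+1) h x) ^ 2)
            ≤ HNorm n f * HNorm (n+1) h :=
          mul_le_mul hsf hsh (Real.sqrt_nonneg _) (HNorm_nonneg _ _)
        calc 2 * HNorm (n+1) g * _ ≤ 2 * HNorm (n+1) g * (HNorm n f * HNorm (n+1) h) :=
              mul_le_mul_of_nonneg_left h1
                (by have := HNorm_nonneg (n+1) g; linarith)
          _ = 2 * P := by rw [hP]; ring
    calc |I (k+1)| ≤ c * (2 * P) := by
          refine le_trans step1 ?_
          exact mul_le_mul_of_nonneg_left step2 hc0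
      _ ≤ (2:ℝ) ^ (n+1) * (2 * P) := mul_le_mul_of_nonneg_right hcle (by positivity)
  -- assemble
  have hmidsum : |∑ k ∈ Finset.range n, I (k+1)| ≤ (n : ℝ) * ((2:ℝ) ^ (n+1) * (2 * P)) := by
    calc |∑ k ∈ Finset.range n, I (k+1)| ≤ ∑ k ∈ Finset.range n, |I (k+1)| :=
          Finset.abs_sum_le_sum_abs _ _
      _ ≤ ∑ _k ∈ Finset.range n, (2:ℝ) ^ (n+1) * (2 * P) := Finset.sum_le_sum hmid
      _ = (n : ℝ) * ((2:ℝ) ^ (n+1) * (2 * P)) := by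
          rw [Finset.sum_const, Finset.card_range]; simp [nsmul_eq_mul]
  rw [hsplit, hpeel]
  have htri : |(∑ k ∈ Finset.range n, I (k+1) + I 0) + I (n+1)|
      ≤ |∑ k ∈ Finset.range n, I (k+1)| + |I 0| + |I (n+1)| :=
    le_trans (abs_add_le _ _) (by linarith [abs_add_le (∑ k ∈ Finset.range n, I (k+1)) (I 0)])
  have hCP : (n : ℝ) * ((2:ℝ) ^ (n+1) * (2 * P))
      ≤ ((n:ℝ) + 1) * 2 ^ (n + 2) * HNorm n f * HNorm (n + 1) g * HNorm (n + 1) h := by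
    have e4 : ((n:ℝ) + 1) * 2 ^ (n + 2) * HNorm n f * HNorm (n + 1) g * HNorm (n + 1) h
        = ((n:ℝ) + 1) * ((2:ℝ) ^ (n+1) * (2 * P)) := by rw [hP]; ring
    rw [e4]
    have hQ0 : 0 ≤ (2:ℝ) ^ (n+1) * (2 * P) := by
      apply mul_nonneg (by positivity); linarith
    exact mul_le_mul_of_nonneg_right (by linarith [Nat.cast_nonneg (α := ℝ) n]) hQ0
  rw [← hI0, ← hIn]
  refine le_trans htri ?_
  have hfin := le_trans hmidsum hCP
  linarith
end
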